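/- arXiv:alg-geom/9411014 — 10 statements merged into one kernel-verified Lean document; each statement's English description precedes it below -/
import Mathlib

section
/- Let F be a field and D = (C_1,…,C_r) a northwest diagram. Let V be a finite-dimensional F-vector space and V_1,…,V_r subspaces of V such that dim V_j = |C_j| for every j and dim(⋂_{j∈S} V_j) ≥ |⋂_{j∈S} C_j| for every nonempty subset S ⊆ {1,…,r}. Then dim(Σ_{j∈S} V_j) ≤ |⋃_{j∈S} C_j| for every nonempty subset S ⊆ {1,…,r}. -/
/-- A diagram, given as a list of columns `C : Fin r → Finset ℕ`, is *northwest* if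
for all `j ≤ j'`, `i ∈ C j` and `i' ∈ C j'` imply `min i i' ∈ C j`. -/
def IsNorthwest {r : ℕ} (C : Fin r → Finset ℕ) : Prop :=
  ∀ j j' : Fin r, j ≤ j' → ∀ i ∈ C j, ∀ i' ∈ C j', min i i' ∈ C j

theorem dim_sum_le_card_union_of_northwest
    (F : Type) [Field F] (r : ℕ) (C : Fin r → Finset ℕ)
    (hNW : IsNorthwest C)
    (V : Type) [AddCommGroup V] [Module F V] [FiniteDimensional F V]
    (W : Fin r → Submodule F V)
    (hdim : ∀ j, Module.finrank F (W j) = (C j).card)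
    (hint : ∀ (S : Finset (Fin r)) (hS : S.Nonempty),
      (S.inf' hS C).card ≤ Module.finrank F ↥(⨅ j ∈ S, W j)) :
    ∀ (S : Finset (Fin r)), S.Nonempty →
      Module.finrank F ↥(⨆ j ∈ S, W j) ≤ (S.sup C).card := by
  intro S
  induction S using Finset.strongInduction with
  | _ S ih =>
  intro hS
  set m := S.max' hS with hm
  have hmS : m ∈ S := S.max'_mem hS
  by_cases h1 : S.erase m = ∅
  · have hSm : S = {m} := by
      apply Finset.eq_singleton_iff_unique_mem.2
      exact ⟨hmS, fun x hx => by
        by_contra hne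
        exact (Finset.eq_empty_iff_forall_notMem.1 h1 x) (Finset.mem_erase.2 ⟨hne, hx⟩)⟩
    rw [hSm]
    have : (⨆ j ∈ ({m} : Finset (Fin r)), W j) = W m := by
      rw [← Finset.sup_eq_iSup, Finset.sup_singleton]
    rw [this, hdim m, Finset.sup_singleton]
  · have hS' : (S.erase m).Nonempty := Finset.nonempty_iff_ne_empty.2 h1
    set S' := S.erase m with hS'def
    have hSins : S = insert m S' := (Finset.insert_erase hmS).symm
    have hle : ∀ j ∈ S', j ≤ m := fun j hj => S.le_max' j (Finset.mem_of_mem_erase hj)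
    obtain ⟨j0, hj0S, hj0max⟩ :=
      Finset.exists_max_image S' (fun j => ((C j) ∩ C m).card) hS'
    -- nestedness
    have hnest : ∀ j ∈ S', C j ∩ C m ⊆ C j0 ∩ C m := by
      intro j hj
      have hcomp : C j ∩ C m ⊆ C j0 ∩ C m ∨ C j0 ∩ C m ⊆ C j ∩ C m := by
        by_contra hc
        push_neg at hc
        obtain ⟨h1', h2'⟩ := hc
        obtain ⟨x, hx, hxn⟩ := Finset.not_subset.1 h1'
        obtain ⟨y, hy, hyn⟩ := Finset.not_subset.1 h2'
        have hxj : x ∈ C j := (Finset.mem_inter.1 hx).1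
        have hxm : x ∈ C m := (Finset.mem_inter.1 hx).2
        have hyj0 : y ∈ C j0 := (Finset.mem_inter.1 hy).1
        have hym : y ∈ C m := (Finset.mem_inter.1 hy).2
        have hmin1 : min x y ∈ C j := hNW j m (hle j hj) x hxj y hym
        have hmin2 : min x y ∈ C j0 := by
          have := hNW j0 m (hle j0 hj0S) y hyj0 x hxm
          rwa [min_comm] at this
        rcases min_cases x y with ⟨he, _⟩ | ⟨he, _⟩
        · exact hxn (Finset.mem_inter.2 ⟨he ▸ hmin2, hxm⟩)
        · exact hyn (Finset.mem_inter.2 ⟨he ▸ hmin1, hym⟩)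
      rcases hcomp with h | h
      · exact h
      · exact Finset.subset_of_eq (Finset.eq_of_subset_of_card_le h (hj0max j hj)).symm
    -- dimension of the pairwise intersection
    have hj0m : j0 ≠ m := (Finset.mem_erase.1 hj0S).1
    have hpair : (C j0 ∩ C m).card ≤ Module.finrank F ↥(W j0 ⊓ W m) := by
      have hne : ({j0, m} : Finset (Fin r)).Nonempty := ⟨j0, by simp⟩
      have := hint {j0, m} hne
      have e1 : ({j0, m} : Finset (Fin r)).inf' hne C = C j0 ∩ C m := by
        simp [Finset.inf'_insert, Finset.inf_eq_inter]
      have e2 : (⨅ j ∈ ({j0, m} : Finset (Fin r)), W j) = W j0 ⊓ W m := by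
        rw [← Finset.inf_eq_iInf, Finset.inf_insert, Finset.inf_singleton]
      rw [e1, e2] at this
      exact this
    set U : Submodule F V := ⨆ j ∈ S', W j with hU
    have hUm : W j0 ⊓ W m ≤ U ⊓ W m := by
      apply inf_le_inf_right
      exact le_biSup W hj0S
    have hrankUm : (C j0 ∩ C m).card ≤ Module.finrank F ↥(U ⊓ W m) :=
      le_trans hpair (Submodule.finrank_mono hUm)
    have hcap : (S'.sup C ∩ C m) ⊆ C j0 ∩ C m := by
      intro x hx
      obtain ⟨hx1, hx2⟩ := Finset.mem_inter.1 hx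
      obtain ⟨j, hj, hxj⟩ := Finset.mem_sup.1 hx1
      exact hnest j hj (Finset.mem_inter.2 ⟨hxj, hx2⟩)
    have hcapcard : (S'.sup C ∩ C m).card ≤ Module.finrank F ↥(U ⊓ W m) :=
      le_trans (Finset.card_le_card hcap) hrankUm
    -- rank formula
    have hrk : Module.finrank F ↥(U ⊔ W m) + Module.finrank F ↥(U ⊓ W m)
        = Module.finrank F ↥U + Module.finrank F ↥(W m) :=
      Submodule.finrank_sup_add_finrank_inf_eq U (W m)
    have hcardf : (S'.sup C ∪ C m).card + (S'.sup C ∩ C m).card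
        = (S'.sup C).card + (C m).card := Finset.card_union_add_card_inter _ _
    have hIH : Module.finrank F ↥U ≤ (S'.sup C).card :=
      ih S' (Finset.erase_ssubset hmS) hS'
    have hsupeq : (⨆ j ∈ S, W j) = U ⊔ W m := by
      rw [hSins, ← Finset.sup_eq_iSup, Finset.sup_insert, hU, ← Finset.sup_eq_iSup,
        sup_comm]
    have hCeq : S.sup C = S'.sup C ∪ C m := by
      rw [hSins, Finset.sup_insert, Finset.sup_eq_union]
      exact Finset.union_comm _ _
    rw [hsupeq, hCeq]
    have hdm := hdim m
    omega
end

section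
/- Let F be a field, N ≥ 1, and D = (C_1,…,C_r) a northwest diagram with pairwise distinct columns contained in {1,…,N} that is closed under intersections (for every nonempty S ⊆ {1,…,r}, the set ⋂_{j∈S} C_j equals some column of D). Let V_1,…,V_r be subspaces of F^N such that for every nonempty subset S ⊆ {1,…,r}: dim(Σ_{j∈S} V_j) = |⋃_{j∈S} C_j| and dim(⋂_{j∈S} V_j) = |⋂_{j∈S} C_j|. Then there exists a basis v_1,…,v_N of F^N such that V_j = span{v_i : i ∈ C_j} for every j. -/
/-- `A` is an *initial subset* of `B` : `A ⊊ B` and every element of `B \ A` is greater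
than every element of `A`. -/
def InitSub (A B : Finset ℕ) : Prop :=
  A ⊂ B ∧ ∀ x ∈ B \ A, ∀ y ∈ A, y < x

/-- Lexicographic comparison of finite subsets of `ℕ`, comparing the increasing lists of
elements: `A <lex B` iff the sorted list of `A` is smaller than that of `B` in the
(strict) lexicographic order on lists (in particular a proper initial segment is
smaller). -/
def LexLT (A B : Finset ℕ) : Prop :=
  List.Lex (· < ·) (A.sort (· ≤ ·)) (B.sort (· ≤ ·))

/-- A list of columns is *lexicographic* if it is strictly increasing in `LexLT`
(in particular the columns are pairwise distinct). -/
def IsLex {r : ℕ} (C : Fin r → Finset ℕ) : Prop :=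
  ∀ a b : Fin r, a < b → LexLT (C a) (C b)

/-!
For a row `k`, let `rowSpace C W k` be the intersection of the subspaces `W j` whose column
contains `k` (the whole space if there is none). Closure of the diagram under intersections,
together with the prescribed dimensions of intersections, makes it equal to one of these `W j`.
Hence for any set `P` of rows the sum of the row spaces of `P` is a sum of subspaces `W j` whose
columns cover `P`, so its dimension is at least `#P`. By Rado's theorem for subspaces there are
linearly independent `v k ∈ rowSpace C W k`; they form a basis, and `W j` contains the
`#(C j) = dim W j` vectors `v k` with `k ∈ C j`, which therefore span it.

Rado's theorem is proved by induction on the number of subspaces, relative to a subspace `U`: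
call a set `P` tight if `U + ∑_{i ∈ P} X i` has dimension exactly `dim U + #P`. Tight sets are
closed under unions by the modular law, so there is a largest one, `P₀`; any `v₀ ∈ X 0` outside
`U + ∑_{i ∈ P₀} X i` can be added to `U` without breaking the condition for the other subspaces.
-/

open Module Submodule Finset

section Rado

variable {F V ι : Type*} [Field F] [AddCommGroup V] [Module F V]

def RadoCondition (U : Submodule F V) (X : ι → Submodule F V) : Prop :=
  ∀ P : Finset ι, finrank F U + #P ≤ finrank F ↥(U ⊔ P.sup X)

def IsTight (U : Submodule F V) (X : ι → Submodule F V) (P : Finset ι) : Prop :=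
  finrank F ↥(U ⊔ P.sup X) = finrank F U + #P

variable {U : Submodule F V} {X : ι → Submodule F V}

lemma isTight_empty : IsTight U X ∅ := by
  rw [IsTight, sup_empty, sup_bot_eq, card_empty, add_zero]

lemma RadoCondition.comp_succ {n : ℕ} {X : Fin (n + 1) → Submodule F V}
    (hX : RadoCondition U X) : RadoCondition U (X ∘ Fin.succ) := fun P => by
  have := hX (P.map (Fin.succEmb n))
  rwa [sup_map, card_map] at this

variable [FiniteDimensional F V]

lemma IsTight.union [DecidableEq ι] (hX : RadoCondition U X) {P Q : Finset ι}
    (hP : IsTight U X P) (hQ : IsTight U X Q) : IsTight U X (P ∪ Q) := by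
  have hmodular := finrank_sup_add_finrank_inf_eq (U ⊔ P.sup X) (U ⊔ Q.sup X)
  have hsup : (U ⊔ P.sup X) ⊔ (U ⊔ Q.sup X) = U ⊔ (P ∪ Q).sup X := by
    rw [sup_union, sup_sup_sup_comm, sup_idem]
  have hinf : U ⊔ (P ∩ Q).sup X ≤ (U ⊔ P.sup X) ⊓ (U ⊔ Q.sup X) :=
    le_inf (sup_le_sup_left (sup_mono inter_subset_left) U)
      (sup_le_sup_left (sup_mono inter_subset_right) U)
  have hinf_finrank := finrank_mono hinf
  have hinter := hX (P ∩ Q)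
  have hunion := hX (P ∪ Q)
  have hcard := card_union_add_card_inter P Q
  rw [hsup, hP, hQ] at hmodular
  unfold IsTight
  omega

lemma RadoCondition.exists_isTight_forall_subset [Fintype ι] [DecidableEq ι]
    (hX : RadoCondition U X) : ∃ P₀, IsTight U X P₀ ∧ ∀ P, IsTight U X P → P ⊆ P₀ := by
  classical
  refine ⟨(univ.filter (IsTight U X)).sup id, ?_, fun P hP => ?_⟩
  · exact sup_induction isTight_empty (fun _ hP _ hQ => hP.union hX hQ)
      fun P hP => (mem_filter.mp hP).2
  · exact le_sup (f := id) (mem_filter.mpr ⟨mem_univ _, hP⟩)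

lemma RadoCondition.exists_mem_radoCondition_succ {n : ℕ} {X : Fin (n + 1) → Submodule F V}
    (hX : RadoCondition U X) :
    ∃ v₀ ∈ X 0, v₀ ∉ U ∧ RadoCondition (U ⊔ span F {v₀}) (X ∘ Fin.succ) := by
  obtain ⟨P₀, hP₀, hmax⟩ := hX.comp_succ.exists_isTight_forall_subset
  have hcons := hX (cons 0 (P₀.map (Fin.succEmb n)) (by simp))
  rw [sup_cons, sup_map, card_cons, card_map, Fin.coe_succEmb] at hcons
  have hnot : ¬ X 0 ≤ U ⊔ P₀.sup (X ∘ Fin.succ) := by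
    intro hle
    rw [sup_left_comm, sup_eq_right.mpr hle] at hcons
    unfold IsTight at hP₀
    omega
  obtain ⟨v₀, hv₀X, hv₀⟩ := SetLike.not_le_iff_exists.mp hnot
  have hv₀U : v₀ ∉ U := fun hU => hv₀ (mem_sup_left hU)
  refine ⟨v₀, hv₀X, hv₀U, fun P => ?_⟩
  rw [finrank_sup_span_singleton hv₀U, sup_right_comm]
  by_cases hP : IsTight U (X ∘ Fin.succ) P
  · have hv₀P : v₀ ∉ U ⊔ P.sup (X ∘ Fin.succ) :=
      fun h => hv₀ (sup_le_sup_left (sup_mono (hmax P hP)) U h)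
    rw [finrank_sup_span_singleton hv₀P, hP]
    omega
  · have hstrict := lt_of_le_of_ne (hX.comp_succ P) (Ne.symm hP)
    have hmono := finrank_mono (le_sup_left : U ⊔ P.sup (X ∘ Fin.succ) ≤ _ ⊔ span F {v₀})
    omega

lemma RadoCondition.exists_forall_mem {n : ℕ} {X : Fin n → Submodule F V}
    (hX : RadoCondition U X) :
    ∃ v : Fin n → V, (∀ i, v i ∈ X i) ∧
      finrank F U + n ≤ finrank F ↥(U ⊔ span F (Set.range v)) := by
  induction n generalizing U with
  | zero =>
    refine ⟨Fin.elim0, fun i => i.elim0, ?_⟩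
    rw [Set.range_eq_empty, span_empty, sup_bot_eq, add_zero]
  | succ n ih =>
    obtain ⟨v₀, hv₀X, hv₀U, hX'⟩ := hX.exists_mem_radoCondition_succ
    obtain ⟨w, hwX, hw⟩ := ih hX'
    refine ⟨Fin.cons v₀ w, Fin.cases hv₀X hwX, ?_⟩
    rw [finrank_sup_span_singleton hv₀U] at hw
    rw [Fin.range_cons, span_insert, ← sup_assoc]
    omega

/-- Rado's theorem for subspaces. -/
theorem exists_linearIndependent_forall_mem [Fintype ι] (X : ι → Submodule F V)
    (hX : ∀ P : Finset ι, #P ≤ finrank F ↥(P.sup X)) :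
    ∃ v : ι → V, LinearIndependent F v ∧ ∀ i, v i ∈ X i := by
  let e := Fintype.equivFin ι
  have hrado : RadoCondition ⊥ (X ∘ e.symm) := fun P => by
    have := hX (P.map e.symm.toEmbedding)
    rw [finrank_bot, bot_sup_eq, zero_add]
    rwa [sup_map, card_map] at this
  obtain ⟨w, hwX, hw⟩ := hrado.exists_forall_mem
  refine ⟨w ∘ e, ?_, fun i => by simpa using hwX (e i)⟩
  rw [linearIndependent_iff_card_le_finrank_span, EquivLike.range_comp]
  rwa [finrank_bot, bot_sup_eq, zero_add] at hw

end Rado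

section Configuration

variable {F V ι R : Type*} [Field F] [AddCommGroup V] [Module F V]
  {C : ι → Finset R} {W : ι → Submodule F V}

def rowSpace (C : ι → Finset R) (W : ι → Submodule F V) (k : R) : Submodule F V :=
  ⨅ (j) (_ : k ∈ C j), W j

lemma rowSpace_le {k : R} {j : ι} (hk : k ∈ C j) : rowSpace C W k ≤ W j :=
  iInf₂_le j hk

lemma rowSpace_eq_top {k : R} (hk : ∀ j, k ∉ C j) : rowSpace C W k = ⊤ := by
  simp [rowSpace, hk]

structure HasDiagramDimensions [DecidableEq R] (C : ι → Finset R) (W : ι → Submodule F V) :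
    Prop where
  finrank_iSup : ∀ S : Finset ι, S.Nonempty → finrank F ↥(⨆ j ∈ S, W j) = #(S.sup C)
  finrank_iInf : ∀ (S : Finset ι) (hS : S.Nonempty), finrank F ↥(⨅ j ∈ S, W j) = #(S.inf' hS C)

namespace HasDiagramDimensions

variable [DecidableEq R] (hW : HasDiagramDimensions C W)
include hW

lemma finrank_eq_card (j : ι) : finrank F ↥(W j) = #(C j) := by
  have := hW.finrank_iSup {j} (singleton_nonempty j)
  rwa [← Finset.sup_eq_iSup, sup_singleton, sup_singleton] at this

variable [FiniteDimensional F V]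

lemma mono {a b : ι} (hab : C a ⊆ C b) : W a ≤ W b := by
  classical
  have hpair := hW.finrank_iInf {a, b} (insert_nonempty a {b})
  rw [← Finset.inf_eq_iInf, inf_insert, inf_singleton, inf'_insert (H := singleton_nonempty b),
    inf'_singleton, inf_eq_left.mpr hab, ← hW.finrank_eq_card a] at hpair
  exact inf_eq_left.mp (eq_of_le_of_finrank_eq inf_le_left hpair)

lemma iInf_eq_of_inf'_eq {S : Finset ι} (hS : S.Nonempty) {j : ι} (hj : S.inf' hS C = C j) :
    ⨅ i ∈ S, W i = W j := by
  have hle : W j ≤ ⨅ i ∈ S, W i := le_iInf₂ fun i hi => hW.mono (hj ▸ inf'_le C hi)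
  refine (eq_of_le_of_finrank_eq hle ?_).symm
  rw [hW.finrank_eq_card, hW.finrank_iInf S hS, hj]

lemma exists_mem_rowSpace_eq [Fintype ι]
    (hclosed : ∀ (S : Finset ι) (hS : S.Nonempty), ∃ j, S.inf' hS C = C j)
    {k : R} (hk : ∃ j, k ∈ C j) : ∃ j, k ∈ C j ∧ rowSpace C W k = W j := by
  classical
  let S := univ.filter (k ∈ C ·)
  have hS : S.Nonempty := by simpa [S, Finset.Nonempty] using hk
  obtain ⟨j, hj⟩ := hclosed S hS
  refine ⟨j, ?_, ?_⟩
  · rw [← hj, ← singleton_subset_iff]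
    exact le_inf' hS _ fun i hi => singleton_subset_iff.mpr (mem_filter.mp hi).2
  · rw [← hW.iInf_eq_of_inf'_eq hS hj]
    simp [rowSpace, S]

lemma card_le_finrank_sup_rowSpace [Fintype ι] [Fintype R] (hV : finrank F V = Fintype.card R)
    (hclosed : ∀ (S : Finset ι) (hS : S.Nonempty), ∃ j, S.inf' hS C = C j)
    (P : Finset R) : #P ≤ finrank F ↥(P.sup (rowSpace C W)) := by
  classical
  by_cases hempty : ∃ k ∈ P, ∀ j, k ∉ C j
  · obtain ⟨k, hkP, hk⟩ := hempty
    have htop : P.sup (rowSpace C W) = ⊤ :=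
      eq_top_iff.mpr ((rowSpace_eq_top hk).ge.trans (le_sup hkP))
    rw [htop, finrank_top, hV]
    exact card_le_univ P
  push Not at hempty
  have hrow : ∀ k ∈ P, ∃ j, k ∈ C j ∧ rowSpace C W k = W j := fun k hk =>
    hW.exists_mem_rowSpace_eq hclosed (hempty k hk)
  rcases P.eq_empty_or_nonempty with rfl | ⟨k₀, hk₀⟩
  · simp
  let T := univ.filter fun j => ∃ k ∈ P, k ∈ C j ∧ rowSpace C W k = W j
  have hT : T.Nonempty := by
    obtain ⟨j, hj⟩ := hrow k₀ hk₀
    exact ⟨j, mem_filter.mpr ⟨mem_univ j, k₀, hk₀, hj⟩⟩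
  have hTW : T.sup W = P.sup (rowSpace C W) := by
    refine le_antisymm (Finset.sup_le fun j hj => ?_) (Finset.sup_le fun k hk => ?_)
    · obtain ⟨k, hk, -, hkj⟩ := (mem_filter.mp hj).2
      exact hkj ▸ le_sup hk
    · obtain ⟨j, hkj, hrj⟩ := hrow k hk
      exact hrj ▸ le_sup (mem_filter.mpr ⟨mem_univ j, k, hk, hkj, hrj⟩)
  have hPT : P ⊆ T.sup C := fun k hk => by
    obtain ⟨j, hkj, hrj⟩ := hrow k hk
    exact le_sup (f := C) (mem_filter.mpr ⟨mem_univ j, k, hk, hkj, hrj⟩) hkj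
  calc #P ≤ #(T.sup C) := card_le_card hPT
    _ = finrank F ↥(P.sup (rowSpace C W)) := by
      rw [← hW.finrank_iSup T hT, ← Finset.sup_eq_iSup, hTW]

theorem exists_basis_span_image_eq [Fintype ι] [Fintype R] (hV : finrank F V = Fintype.card R)
    (hclosed : ∀ (S : Finset ι) (hS : S.Nonempty), ∃ j, S.inf' hS C = C j) :
    ∃ b : Basis R F V, ∀ j, W j = span F (b '' C j) := by
  obtain ⟨v, hv, hvrow⟩ := exists_linearIndependent_forall_mem (rowSpace C W)
    (hW.card_le_finrank_sup_rowSpace hV hclosed)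
  refine ⟨basisOfLinearIndependentOfCardEqFinrank' v hv hV.symm, fun j => ?_⟩
  rw [coe_basisOfLinearIndependentOfCardEqFinrank']
  have hle : span F (v '' C j) ≤ W j :=
    span_le.mpr fun _ ⟨k, hk, hkv⟩ => hkv ▸ rowSpace_le hk (hvrow k)
  have hfinrank : finrank F ↥(span F (v '' C j)) = #(C j) := by
    rw [← Subtype.range_coe (s := (C j : Set R)), ← Set.range_comp,
      finrank_span_eq_card (hv.comp _ Subtype.val_injective)]
    simp
  exact (eq_of_le_of_finrank_eq hle (by rw [hfinrank, hW.finrank_eq_card])).symm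

end HasDiagramDimensions

end Configuration

theorem config_from_basis_general (F : Type) [Field F] (N r : ℕ)
    (C : Fin r → Finset ℕ)
    (hsub : ∀ j, C j ⊆ Finset.Icc 1 N)
    (hclosed : ∀ (S : Finset (Fin r)) (hS : S.Nonempty), ∃ j, S.inf' hS C = C j)
    (W : Fin r → Submodule F (Fin N → F))
    (hsup : ∀ (S : Finset (Fin r)), S.Nonempty →
      Module.finrank F ↥(⨆ j ∈ S, W j) = (S.sup C).card)
    (hinf : ∀ (S : Finset (Fin r)) (hS : S.Nonempty),
      Module.finrank F ↥(⨅ j ∈ S, W j) = (S.inf' hS C).card) :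
    ∃ v : Module.Basis (Fin N) F (Fin N → F),
      ∀ j, W j = Submodule.span F (v '' {k : Fin N | (k : ℕ) + 1 ∈ C j}) := by
  let e : Fin N ↪ ℕ := Fin.valEmbedding.trans (addRightEmbedding 1)
  have hrange j : C j ⊆ univ.map e := fun x hx => by
    have := mem_Icc.mp (hsub j hx)
    exact mem_map.mpr ⟨⟨x - 1, by omega⟩, mem_univ _, show x - 1 + 1 = x by omega⟩
  choose C' _ hC' using fun j => subset_map_iff.mp (hrange j)
  have hmap_sup (S : Finset (Fin r)) : S.sup C = (S.sup C').map e := by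
    rw [apply_sup_eq_sup_comp (map e) (fun s t => map_union s t) (map_empty e)]
    exact sup_congr rfl fun j _ => hC' j
  have hmap_inf' (S : Finset (Fin r)) (hS : S.Nonempty) :
      S.inf' hS C = (S.inf' hS C').map e := by
    rw [apply_inf'_eq_inf'_comp hS (map e) (fun s t => map_inter s t)]
    exact inf'_congr hS rfl fun j _ => hC' j
  have hW : HasDiagramDimensions C' W :=
    ⟨fun S hS => by rw [hsup S hS, hmap_sup, card_map],
      fun S hS => by rw [hinf S hS, hmap_inf', card_map]⟩
  obtain ⟨b, hb⟩ := hW.exists_basis_span_image_eq (by rw [finrank_fintype_fun_eq_card])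
    fun S hS => (hclosed S hS).imp fun j hj => map_injective e (by rw [← hmap_inf', hj, hC'])
  refine ⟨b, fun j => ?_⟩
  have hcol : {k : Fin N | (k : ℕ) + 1 ∈ C j} = C' j := by
    ext k
    exact (hC' j).symm ▸ mem_map' e
  rw [hcol, hb j]

/-- In a northwest diagram with distinct columns in `{1,…,N}` (rows encoded on `Fin N`,
`k : Fin N` standing for the row `k+1`) closed under intersections, any family of
subspaces of `F^N` whose sums and intersections have exactly the dimensions prescribed
by the unions and intersections of the columns is a "generic" configuration: it comes
from a single basis of `F^N`. -/
theorem config_from_basis (F : Type) [Field F] (N r : ℕ) (hN : 1 ≤ N)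
    (C : Fin r → Finset ℕ) (hNW : IsNorthwest C) (hinj : Function.Injective C)
    (hsub : ∀ j, C j ⊆ Finset.Icc 1 N)
    (hclosed : ∀ (S : Finset (Fin r)) (hS : S.Nonempty), ∃ j, S.inf' hS C = C j)
    (W : Fin r → Submodule F (Fin N → F))
    (hsup : ∀ (S : Finset (Fin r)), S.Nonempty →
      Module.finrank F ↥(⨆ j ∈ S, W j) = (S.sup C).card)
    (hinf : ∀ (S : Finset (Fin r)) (hS : S.Nonempty),
      Module.finrank F ↥(⨅ j ∈ S, W j) = (S.inf' hS C).card) :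
    ∃ v : Module.Basis (Fin N) F (Fin N → F),
      ∀ j, W j = Submodule.span F (v '' {k : Fin N | (k : ℕ) + 1 ∈ C j}) :=
  config_from_basis_general F N r C hsub hclosed W hsup hinf
end

section
/- Let F be a field, N ≥ 1, and D = (C_1,…,C_r) a northwest diagram with all columns contained in {1,…,N}. Let Ĉ = ⋂_{j∈S₀} C_j for some nonempty S₀ ⊆ {1,…,r}, and assume that every set of the form ⋂_{j∈S} C_j (S nonempty) that is strictly contained in Ĉ is equal to some column of D. Let V_1,…,V_r be subspaces of F^N satisfying the intersection conditions for D. Then there exists a subspace V̂ of F^N with dim V̂ = |Ĉ| such that Σ_{j : C_j ⊆ Ĉ} V_j ⊆ V̂ ⊆ ⋂_{j : Ĉ ⊆ C_j} V_j and the extended family satisfies the intersection conditions for the diagram (C_1,…,C_r,Ĉ); in particular dim(V̂ ∩ ⋂_{j∈S} V_j) ≥ |Ĉ ∩ ⋂_{j∈S} C_j| for every subset S ⊆ {1,…,r}. -/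
/-!
`V̂` is any subspace of dimension `|Ĉ|` squeezed between `L = Σ_{C_j ⊆ Ĉ} V_j` and
`U = ⋂_{Ĉ ⊆ C_j} V_j`. The intersection conditions give `|Ĉ| ≤ dim U`, and force `V_j ≤ V_k`
whenever `C_j ⊆ C_k`, so `L ≤ U`. The northwest property gives `dim L ≤ |Ĉ|`: adding the
columns in increasing order, the new column meets the union of the earlier ones inside a single
earlier column (the one with the largest entry), so by the pairwise conditions the dimension of
the sum grows no faster than the cardinality of the union. For the new intersection conditions,
either `Ĉ ⊆ ⋂_S C_j`, and then `V̂ ≤ U ≤ ⋂_S V_j`; or `Ĉ ∩ ⋂_S C_j` is strictly smaller than `Ĉ`,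
hence a column `C_k`, and `V_k` lies in both `V̂` and `⋂_S V_j`.
-/

open Module Submodule Finset

theorem Submodule.exists_finrank_eq_of_le {F V : Type*} [Field F] [AddCommGroup V] [Module F V]
    [FiniteDimensional F V] {L U : Submodule F V} (hLU : L ≤ U) {c : ℕ}
    (hL : finrank F L ≤ c) (hU : c ≤ finrank F U) :
    ∃ M : Submodule F V, finrank F M = c ∧ L ≤ M ∧ M ≤ U := by
  induction c, hL using Nat.le_induction with
  | base => exact ⟨L, rfl, le_rfl, hLU⟩
  | succ c _ ih =>
    obtain ⟨M, hM, hLM, hMU⟩ := ih (by omega)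
    obtain ⟨x, hxU, hxM⟩ := SetLike.exists_of_lt (lt_of_le_of_ne hMU (by rintro rfl; omega))
    exact ⟨M ⊔ span F {x}, by rw [finrank_sup_span_singleton hxM, hM], le_sup_of_le_left hLM,
      sup_le hMU ((span_singleton_le_iff_mem x U).mpr hxU)⟩

theorem IsNorthwest.exists_inter_sup_subset {r : ℕ} {C : Fin r → Finset ℕ} (hNW : IsNorthwest C)
    {Q : Finset (Fin r)} (hQ : Q.Nonempty) {k : Fin r} (hk : ∀ j ∈ Q, j ≤ k) :
    ∃ j ∈ Q, C k ∩ Q.sup C ⊆ C j := by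
  obtain ⟨j, hjQ, hjmax⟩ := Q.exists_max_image (fun j => (C j).max) hQ
  refine ⟨j, hjQ, fun y hy => ?_⟩
  obtain ⟨hyk, hyQ⟩ := mem_inter.mp hy
  obtain ⟨i, hiQ, hyi⟩ := mem_sup.mp hyQ
  have hy_le : (y : WithBot ℕ) ≤ (C j).sup (↑) := (le_max hyi).trans (hjmax i hiQ)
  obtain ⟨m, hm, hym⟩ := (Finset.le_sup_iff (WithBot.bot_lt_coe y)).mp hy_le
  have hym : y ≤ m := WithBot.coe_le_coe.mp hym
  simpa only [Nat.min_eq_right hym] using hNW j k (hk j hjQ) m hm y hyk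

section IntersectionConditions

variable {F V ι : Type*} [Field F] [AddCommGroup V] [Module F V]
  {C : ι → Finset ℕ} {W : ι → Submodule F V}

theorem card_inter_le_finrank_inf [DecidableEq ι]
    (hinf : ∀ (S : Finset ι) (hS : S.Nonempty), (S.inf' hS C).card ≤ finrank F ↥(⨅ j ∈ S, W j))
    (j k : ι) : (C j ∩ C k).card ≤ finrank F ↥(W j ⊓ W k) := by
  have h := hinf {j, k} (insert_nonempty _ _)
  rwa [inf'_insert (singleton_nonempty k), inf'_singleton, Finset.iInf_insert,
    Finset.iInf_singleton] at h

theorem le_biInf_of_subset_inf' [FiniteDimensional F V] [DecidableEq ι]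
    (hinf : ∀ (S : Finset ι) (hS : S.Nonempty), (S.inf' hS C).card ≤ finrank F ↥(⨅ j ∈ S, W j))
    {j : ι} (hj : finrank F (W j) = (C j).card) {S : Finset ι} (hS : S.Nonempty)
    (hsub : C j ⊆ S.inf' hS C) : W j ≤ ⨅ i ∈ S, W i := by
  have h := hinf (insert j S) (S.insert_nonempty j)
  rw [inf'_insert hS, inf_eq_left.mpr hsub, Finset.iInf_insert, ← hj] at h
  exact inf_eq_left.mp (eq_of_le_of_finrank_le inf_le_left h)

theorem card_inf'_le_finrank_biInf_supset [Fintype ι] [DecidableEq ι]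
    (hinf : ∀ (S : Finset ι) (hS : S.Nonempty), (S.inf' hS C).card ≤ finrank F ↥(⨅ j ∈ S, W j))
    {S₀ : Finset ι} (hS₀ : S₀.Nonempty) :
    (S₀.inf' hS₀ C).card ≤ finrank F ↥(⨅ (j : ι) (_ : S₀.inf' hS₀ C ⊆ C j), W j) := by
  set T := univ.filter fun j => S₀.inf' hS₀ C ⊆ C j
  have hS₀T : S₀ ⊆ T := fun j hj => mem_filter.mpr ⟨mem_univ j, inf'_le C hj⟩
  have hT : T.inf' (hS₀.mono hS₀T) C = S₀.inf' hS₀ C :=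
    le_antisymm (inf'_mono C hS₀T hS₀) (le_inf' _ C fun j hj => (mem_filter.mp hj).2)
  have hTW : ⨅ j ∈ T, W j = ⨅ (j : ι) (_ : S₀.inf' hS₀ C ⊆ C j), W j :=
    le_antisymm (le_iInf₂ fun j hj => iInf₂_le j (Finset.mem_filter.mpr ⟨mem_univ j, hj⟩))
      (le_iInf₂ fun j hj => iInf₂_le j (Finset.mem_filter.mp hj).2)
  exact hTW ▸ hT ▸ hinf T (hS₀.mono hS₀T)

theorem finrank_sup_le_card_sup {r : ℕ} [FiniteDimensional F V] {C : Fin r → Finset ℕ}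
    {W : Fin r → Submodule F V} (hNW : IsNorthwest C)
    (hdim : ∀ j, finrank F (W j) = (C j).card)
    (hpair : ∀ j k, (C j ∩ C k).card ≤ finrank F ↥(W j ⊓ W k)) (Q : Finset (Fin r)) :
    finrank F ↥(Q.sup W) ≤ (Q.sup C).card := by
  induction Q using Finset.induction_on_max with
  | empty => simp
  | insert k Q hk ih =>
    rw [sup_insert, sup_insert, sup_eq_union]
    have hinter : (C k ∩ Q.sup C).card ≤ finrank F ↥(W k ⊓ Q.sup W) := by
      rcases Q.eq_empty_or_nonempty with rfl | hQ
      · simp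
      obtain ⟨j, hjQ, hj⟩ := hNW.exists_inter_sup_subset hQ fun j hj => (hk j hj).le
      calc (C k ∩ Q.sup C).card ≤ (C j ∩ C k).card :=
            card_le_card (subset_inter hj inter_subset_left)
        _ ≤ finrank F ↥(W j ⊓ W k) := hpair j k
        _ ≤ finrank F ↥(W k ⊓ Q.sup W) :=
            finrank_mono (inf_comm (W j) (W k) ▸ inf_le_inf_left _ (le_sup hjQ))
    have := finrank_sup_add_finrank_inf_eq (W k) (Q.sup W)
    have := card_union_add_card_inter (C k) (Q.sup C)
    have := hdim k
    omega

theorem finrank_iSup_subset_le_card {r : ℕ} [FiniteDimensional F V] {C : Fin r → Finset ℕ}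
    {W : Fin r → Submodule F V} (hNW : IsNorthwest C)
    (hdim : ∀ j, finrank F (W j) = (C j).card)
    (hpair : ∀ j k, (C j ∩ C k).card ≤ finrank F ↥(W j ⊓ W k)) (A : Finset ℕ) :
    finrank F ↥(⨆ (j : Fin r) (_ : C j ⊆ A), W j) ≤ A.card := by
  set Q := univ.filter fun j => C j ⊆ A
  have hQW : Q.sup W = ⨆ (j : Fin r) (_ : C j ⊆ A), W j := by
    simp only [Finset.sup_eq_iSup, Q, Finset.mem_filter, Finset.mem_univ, true_and]
  calc finrank F ↥(⨆ (j : Fin r) (_ : C j ⊆ A), W j) ≤ (Q.sup C).card :=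
        hQW ▸ finrank_sup_le_card_sup hNW hdim hpair Q
    _ ≤ A.card := card_le_card (Finset.sup_le fun j hj => (Finset.mem_filter.mp hj).2)

theorem card_inter_inf'_le_finrank_inf [FiniteDimensional F V] [DecidableEq ι]
    (hdim : ∀ j, finrank F (W j) = (C j).card)
    (hinf : ∀ (S : Finset ι) (hS : S.Nonempty), (S.inf' hS C).card ≤ finrank F ↥(⨅ j ∈ S, W j))
    {A : Finset ℕ} {M : Submodule F V} (hM : finrank F M = A.card)
    (hWM : ⨆ (j : ι) (_ : C j ⊆ A), W j ≤ M) (hMW : M ≤ ⨅ (j : ι) (_ : A ⊆ C j), W j)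
    {S : Finset ι} (hS : S.Nonempty)
    (hcol : A ∩ S.inf' hS C ⊂ A → ∃ k, C k = A ∩ S.inf' hS C) :
    (A ∩ S.inf' hS C).card ≤ finrank F ↥(M ⊓ ⨅ j ∈ S, W j) := by
  by_cases hA : A ⊆ S.inf' hS C
  · have hMS : M ≤ ⨅ j ∈ S, W j :=
      le_iInf₂ fun j hj => hMW.trans (iInf₂_le j (hA.trans (inf'_le C hj)))
    rw [inter_eq_left.mpr hA, inf_eq_left.mpr hMS, hM]
  · obtain ⟨k, hk⟩ := hcol (ssubset_of_subset_of_ne inter_subset_left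
      fun h => hA (h ▸ inter_subset_right))
    have hkM : W k ≤ M :=
      (le_iSup₂ (f := fun j (_ : C j ⊆ A) => W j) k (hk ▸ inter_subset_left)).trans hWM
    have hkS : W k ≤ ⨅ j ∈ S, W j :=
      le_biInf_of_subset_inf' hinf (hdim k) hS (hk ▸ inter_subset_right)
    rw [← hk, ← hdim k]
    exact finrank_mono (le_inf hkM hkS)

end IntersectionConditions

theorem extend_configuration_general (F : Type) [Field F] (N r : ℕ)
    (C : Fin r → Finset ℕ) (hNW : IsNorthwest C)
    (S₀ : Finset (Fin r)) (hS₀ : S₀.Nonempty)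
    (hbelow : ∀ (S : Finset (Fin r)) (hS : S.Nonempty),
      S.inf' hS C ⊂ S₀.inf' hS₀ C → ∃ j, S.inf' hS C = C j)
    (W : Fin r → Submodule F (Fin N → F))
    (hdim : ∀ j, Module.finrank F (W j) = (C j).card)
    (hinf : ∀ (S : Finset (Fin r)) (hS : S.Nonempty),
      (S.inf' hS C).card ≤ Module.finrank F ↥(⨅ j ∈ S, W j)) :
    ∃ Vhat : Submodule F (Fin N → F),
      Module.finrank F Vhat = (S₀.inf' hS₀ C).card ∧
      (⨆ (j : Fin r) (_ : C j ⊆ S₀.inf' hS₀ C), W j) ≤ Vhat ∧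
      Vhat ≤ (⨅ (j : Fin r) (_ : S₀.inf' hS₀ C ⊆ C j), W j) ∧
      (∀ (S : Finset (Fin r)) (hS : S.Nonempty),
        ((S₀.inf' hS₀ C) ∩ S.inf' hS C).card ≤
          Module.finrank F ↥(Vhat ⊓ ⨅ j ∈ S, W j)) := by
  have hpair := card_inter_le_finrank_inf hinf
  have hmono : ∀ j k, C j ⊆ C k → W j ≤ W k := fun j k hjk => by
    simpa only [Finset.iInf_singleton] using
      le_biInf_of_subset_inf' hinf (hdim j) (singleton_nonempty k) (by rwa [inf'_singleton])
  have hLU : ⨆ (j) (_ : C j ⊆ S₀.inf' hS₀ C), W j ≤ ⨅ (j) (_ : S₀.inf' hS₀ C ⊆ C j), W j :=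
    iSup₂_le fun j hj => le_iInf₂ fun k hk => hmono j k (hj.trans hk)
  obtain ⟨Vhat, hVdim, hLV, hVU⟩ := Submodule.exists_finrank_eq_of_le hLU
    (finrank_iSup_subset_le_card hNW hdim hpair _) (card_inf'_le_finrank_biInf_supset hinf hS₀)
  refine ⟨Vhat, hVdim, hLV, hVU, fun S hS =>
    card_inter_inf'_le_finrank_inf hdim hinf hVdim hLV hVU hS fun hlt => ?_⟩
  obtain ⟨k, hk⟩ := hbelow (S₀ ∪ S) (hS₀.mono subset_union_left) (inf'_union hS₀ hS C ▸ hlt)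
  exact ⟨k, hk.symm.trans (inf'_union hS₀ hS C)⟩

/-- One step in the proof of Proposition `conn fibers` (a): a configuration satisfying
the intersection conditions for a northwest diagram `D` can be extended by a subspace
`V̂` for an intersection `Ĉ = ⋂_{j ∈ S₀} C j` of columns, provided every intersection of
columns strictly contained in `Ĉ` is already a column; the extended family satisfies the
intersection conditions for the diagram `(C_1,…,C_r,Ĉ)`. -/
theorem extend_configuration (F : Type) [Field F] (N r : ℕ) (hN : 1 ≤ N)
    (C : Fin r → Finset ℕ) (hNW : IsNorthwest C)
    (hsub : ∀ j, C j ⊆ Finset.Icc 1 N)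
    (S₀ : Finset (Fin r)) (hS₀ : S₀.Nonempty)
    (hbelow : ∀ (S : Finset (Fin r)) (hS : S.Nonempty),
      S.inf' hS C ⊂ S₀.inf' hS₀ C → ∃ j, S.inf' hS C = C j)
    (W : Fin r → Submodule F (Fin N → F))
    (hdim : ∀ j, Module.finrank F (W j) = (C j).card)
    (hinf : ∀ (S : Finset (Fin r)) (hS : S.Nonempty),
      (S.inf' hS C).card ≤ Module.finrank F ↥(⨅ j ∈ S, W j)) :
    ∃ Vhat : Submodule F (Fin N → F),
      Module.finrank F Vhat = (S₀.inf' hS₀ C).card ∧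
      (⨆ (j : Fin r) (_ : C j ⊆ S₀.inf' hS₀ C), W j) ≤ Vhat ∧
      Vhat ≤ (⨅ (j : Fin r) (_ : S₀.inf' hS₀ C ⊆ C j), W j) ∧
      (∀ (S : Finset (Fin r)) (hS : S.Nonempty),
        ((S₀.inf' hS₀ C) ∩ S.inf' hS C).card ≤
          Module.finrank F ↥(Vhat ⊓ ⨅ j ∈ S, W j)) :=
  extend_configuration_general F N r C hNW S₀ hS₀ hbelow W hdim hinf
end

section
/- Let F be a field, N ≥ 1, and D = (C_1,…,C_r) a northwest diagram with all columns contained in {1,…,N}. Let V_1,…,V_r be subspaces of F^N satisfying the intersection conditions for D. Then there exists a family of subspaces (V_Ĉ) of F^N, indexed by the distinct sets Ĉ of the form ⋂_{j∈S} C_j for nonempty S ⊆ {1,…,r}, such that: dim V_Ĉ = |Ĉ| for every Ĉ; V_{C_j} = V_j for every j; and Ĉ ⊆ Ĉ' implies V_Ĉ ⊆ V_{Ĉ'}. -/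
open Module Finset

theorem Submodule.exists_le_le_finrank_eq {K M : Type*} [Field K] [AddCommGroup M] [Module K M]
    [FiniteDimensional K M] {L T : Submodule K M} (hLT : L ≤ T) {k : ℕ}
    (hLk : finrank K L ≤ k) (hkT : k ≤ finrank K T) :
    ∃ U : Submodule K M, L ≤ U ∧ U ≤ T ∧ finrank K U = k := by
  induction k, hLk using Nat.le_induction with
  | base => exact ⟨L, le_rfl, hLT, rfl⟩
  | succ k _ ih =>
    obtain ⟨U, hLU, hUT, rfl⟩ := ih (by omega)
    obtain ⟨v, hvT, hvU⟩ := SetLike.exists_of_lt (Submodule.lt_of_le_of_finrank_lt_finrank hUT hkT)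
    exact ⟨U ⊔ K ∙ v, le_sup_of_le_left hLU,
      sup_le hUT ((Submodule.span_singleton_le_iff_mem v T).2 hvT),
      finrank_sup_span_singleton hvU⟩

section NestedTraces

variable {α K M : Type*} [DecidableEq α] [Field K] [AddCommGroup M] [Module K M]
  [FiniteDimensional K M]

theorem finrank_sup_le_card_union {X Y : Submodule K M} {A B : Finset α}
    (hX : finrank K X = #A) (hY : finrank K Y ≤ #B) (hXY : #(A ∩ B) ≤ finrank K ↥(X ⊓ Y)) :
    finrank K ↥(X ⊔ Y) ≤ #(A ∪ B) := by
  have := Submodule.finrank_sup_add_finrank_inf_eq X Y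
  have := card_union_add_card_inter A B
  omega

def HasNestedTraces (𝒮 : Set (Finset α)) : Prop :=
  ∀ P : Finset (Finset α), ↑P ⊆ 𝒮 → P.Nonempty →
    ∃ D ∈ P, IsChain (· ⊆ ·) ((· ∩ D) '' (P : Set (Finset α)))

theorem HasNestedTraces.mono {𝒮 𝒯 : Set (Finset α)} (h : HasNestedTraces 𝒮) (h𝒯 : 𝒯 ⊆ 𝒮) :
    HasNestedTraces 𝒯 :=
  fun P hP => h P (hP.trans h𝒯)

theorem exists_mem_sup_inter_eq {P : Finset (Finset α)} (hP : P.Nonempty) {D : Finset α}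
    (h : IsChain (· ⊆ ·) ((· ∩ D) '' (P : Set (Finset α)))) :
    ∃ D₀ ∈ P, P.sup id ∩ D = D₀ ∩ D := by
  have hclosed : SupClosed ((· ∩ D) '' (P : Set (Finset α))) := by
    intro x hx y hy
    rcases h.total hx hy with hxy | hxy
    · rwa [sup_eq_right.2 hxy]
    · rwa [sup_eq_left.2 hxy]
  obtain ⟨D₀, hD₀, he⟩ := hclosed.finsetSup'_mem hP fun D' hD' => ⟨D', hD', rfl⟩
  refine ⟨D₀, hD₀, ?_⟩
  rw [show D₀ ∩ D = _ from he, sup'_eq_sup, ← inf_eq_inter, sup_inf_distrib_right]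
  rfl

theorem finrank_sup_le_card_sup_s7 {𝒮 : Set (Finset α)} {V : Finset α → Submodule K M}
    (hinter : ∀ A ∈ 𝒮, ∀ B ∈ 𝒮, A ∩ B ∈ 𝒮) (hnest : HasNestedTraces 𝒮)
    (hdim : ∀ A ∈ 𝒮, finrank K (V A) = #A) (hmono : ∀ A ∈ 𝒮, ∀ B ∈ 𝒮, A ⊆ B → V A ≤ V B)
    (P : Finset (Finset α)) (hP : ↑P ⊆ 𝒮) : finrank K ↥(P.sup V) ≤ #(P.sup id) := by
  induction P using Finset.strongInduction with
  | H P ih =>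
  rcases P.eq_empty_or_nonempty with rfl | hPne
  · simp
  obtain ⟨D, hD, hchain⟩ := hnest P hP hPne
  have hQP : P.erase D ⊆ P := erase_subset D P
  rw [← insert_erase hD, sup_insert, sup_insert]
  refine finrank_sup_le_card_union (hdim D (hP hD))
    (ih _ (erase_ssubset hD) (coe_subset.2 hQP |>.trans hP)) ?_
  rcases (P.erase D).eq_empty_or_nonempty with hQ | hQne
  · simp [hQ]
  -- the traces on `D` of the other members are nested, so their union is one of them
  obtain ⟨D₀, hD₀, htrace⟩ :=
    exists_mem_sup_inter_eq hQne (hchain.mono (Set.image_mono (coe_subset.2 hQP)))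
  have hD₀𝒮 : D₀ ∈ 𝒮 := hP (hQP hD₀)
  have hE : D₀ ∩ D ∈ 𝒮 := hinter _ hD₀𝒮 _ (hP hD)
  rw [id_eq, inter_comm, htrace, ← hdim _ hE]
  exact Submodule.finrank_mono (le_inf (hmono _ hE _ (hP hD) inter_subset_right)
    ((hmono _ hE _ hD₀𝒮 inter_subset_left).trans (le_sup hD₀)))

end NestedTraces

section GreedyLift

variable {α K M : Type*} [DecidableEq α] [Field K] [AddCommGroup M] [Module K M]
  (𝒞 : Set (Finset α)) (T : Finset α → Submodule K M)

open scoped Classical in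
noncomputable def greedyLift (A : Finset α) : Submodule K M :=
  if h : ∃ U : Submodule K M,
      ({D ∈ A.ssubsets | D ∈ 𝒞}.attach.sup fun D => greedyLift D.1) ≤ U ∧ U ≤ T A ∧
        finrank K U = #A
  then h.choose else ⊥
termination_by #A
decreasing_by exact card_lt_card (mem_ssubsets.1 (mem_filter.1 D.2).1)

open scoped Classical in
theorem greedyLift_of_exists {A : Finset α}
    (h : ∃ U : Submodule K M,
      {D ∈ A.ssubsets | D ∈ 𝒞}.sup (greedyLift 𝒞 T) ≤ U ∧ U ≤ T A ∧ finrank K U = #A) :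
    {D ∈ A.ssubsets | D ∈ 𝒞}.sup (greedyLift 𝒞 T) ≤ greedyLift 𝒞 T A ∧
      greedyLift 𝒞 T A ≤ T A ∧ finrank K (greedyLift 𝒞 T A) = #A := by
  rw [← sup_attach] at h ⊢
  rw [greedyLift, dif_pos h]
  exact h.choose_spec

theorem greedyLift_spec [FiniteDimensional K M] (hinter : ∀ A ∈ 𝒞, ∀ B ∈ 𝒞, A ∩ B ∈ 𝒞)
    (hnest : HasNestedTraces 𝒞) (hTmono : ∀ A ∈ 𝒞, ∀ B ∈ 𝒞, A ⊆ B → T A ≤ T B)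
    (hTdim : ∀ A ∈ 𝒞, #A ≤ finrank K (T A)) (A : Finset α) (hA : A ∈ 𝒞) :
    finrank K (greedyLift 𝒞 T A) = #A ∧ greedyLift 𝒞 T A ≤ T A ∧
      ∀ D ∈ 𝒞, D ⊂ A → greedyLift 𝒞 T D ≤ greedyLift 𝒞 T A := by
  classical
  induction A using Finset.strongInduction with
  | H A ih =>
  set 𝒮 : Set (Finset α) := {D ∈ 𝒞 | D ⊂ A}
  have hsub : ∀ D ∈ 𝒮, D ∈ {D ∈ A.ssubsets | D ∈ 𝒞} := fun D hD => by
    simpa [mem_ssubsets] using hD.symm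
  have hL_le_T : {D ∈ A.ssubsets | D ∈ 𝒞}.sup (greedyLift 𝒞 T) ≤ T A :=
    Finset.sup_le fun D hD => by
      obtain ⟨hDA, hD⟩ := by simpa [mem_ssubsets] using hD
      exact (ih D hDA hD).2.1.trans (hTmono D hD A hA hDA.subset)
  have hL_dim : finrank K ↥({D ∈ A.ssubsets | D ∈ 𝒞}.sup (greedyLift 𝒞 T)) ≤ #A := by
    refine (finrank_sup_le_card_sup_s7 (𝒮 := 𝒮) ?_ (hnest.mono fun D hD => hD.1) ?_ ?_ _ ?_).trans
      (card_le_card (Finset.sup_le fun D hD => (mem_ssubsets.1 (mem_filter.1 hD).1).subset))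
    · exact fun D hD E hE => ⟨hinter D hD.1 E hE.1, inter_subset_left.trans_ssubset hD.2⟩
    · exact fun D hD => (ih D hD.2 hD.1).1
    · intro D hD E hE hDE
      rcases hDE.eq_or_ssubset with rfl | hDE
      exacts [le_rfl, (ih E hE.2 hE.1).2.2 D hD.1 hDE]
    · intro D hD
      simpa [mem_ssubsets, 𝒮, and_comm] using hD
  obtain ⟨hL, hT, hdim⟩ := greedyLift_of_exists 𝒞 T
    (Submodule.exists_le_le_finrank_eq hL_le_T hL_dim (hTdim A hA))
  exact ⟨hdim, hT, fun D hD hDA => (le_sup (hsub D ⟨hD, hDA⟩)).trans hL⟩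

theorem exists_lift [FiniteDimensional K M] (hinter : ∀ A ∈ 𝒞, ∀ B ∈ 𝒞, A ∩ B ∈ 𝒞)
    (hnest : HasNestedTraces 𝒞) (hTmono : ∀ A ∈ 𝒞, ∀ B ∈ 𝒞, A ⊆ B → T A ≤ T B)
    (hTdim : ∀ A ∈ 𝒞, #A ≤ finrank K (T A)) :
    ∃ V : Finset α → Submodule K M, ∀ A ∈ 𝒞,
      finrank K (V A) = #A ∧ V A ≤ T A ∧ ∀ B ∈ 𝒞, A ⊆ B → V A ≤ V B := by
  have spec := greedyLift_spec 𝒞 T hinter hnest hTmono hTdim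
  refine ⟨greedyLift 𝒞 T, fun A hA => ⟨(spec A hA).1, (spec A hA).2.1, fun B hB hAB => ?_⟩⟩
  rcases hAB.eq_or_ssubset with rfl | hAB
  exacts [le_rfl, (spec B hB).2.2 A hA hAB]

end GreedyLift

section LowerIn

variable {β : Type*} [LinearOrder β]

def IsLowerIn (s A : Finset β) : Prop :=
  ∀ x ∈ s, ∀ y ∈ A, x ≤ y → x ∈ A

theorem IsLowerIn.inter [DecidableEq β] {s A B : Finset β} (hA : IsLowerIn s A)
    (hB : IsLowerIn s B) : IsLowerIn s (A ∩ B) := fun x hx y hy hxy =>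
  mem_inter.2 ⟨hA x hx y (mem_inter.1 hy).1 hxy, hB x hx y (mem_inter.1 hy).2 hxy⟩

theorem IsLowerIn.subset_or_subset {s A B : Finset β} (hA : IsLowerIn s A) (hB : IsLowerIn s B)
    (hAs : A ⊆ s) (hBs : B ⊆ s) : A ⊆ B ∨ B ⊆ A := by
  by_contra! h
  obtain ⟨a, haA, haB⟩ := not_subset.1 h.1
  obtain ⟨b, hbB, hbA⟩ := not_subset.1 h.2
  rcases le_total a b with hab | hab
  · exact haB (hB a (hAs haA) b hbB hab)
  · exact hbA (hA b (hBs hbB) a haA hab)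

end LowerIn

section Northwest

variable {r : ℕ} (C : Fin r → Finset ℕ)

/-- The columns `Ĉ` of the blowup `D̂`. -/
def columnMeets : Set (Finset ℕ) :=
  {A | ∃ (S : Finset (Fin r)) (hS : S.Nonempty), S.inf' hS C = A}

theorem inf'_mem_columnMeets {S : Finset (Fin r)} (hS : S.Nonempty) :
    S.inf' hS C ∈ columnMeets C :=
  ⟨S, hS, rfl⟩

theorem inter_mem_columnMeets {A B : Finset ℕ} (hA : A ∈ columnMeets C)
    (hB : B ∈ columnMeets C) : A ∩ B ∈ columnMeets C := by
  obtain ⟨S, hS, rfl⟩ := hA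
  obtain ⟨S', hS', rfl⟩ := hB
  exact ⟨S ∪ S', hS.mono subset_union_left, inf'_union hS hS' C⟩

variable {C}

theorem IsNorthwest.isLowerIn (hNW : IsNorthwest C) {A : Finset ℕ} (hA : A ∈ columnMeets C)
    {k : Fin r} (hk : ∀ j, A ⊆ C j → j ≤ k) : IsLowerIn (C k) A := by
  obtain ⟨S, hS, rfl⟩ := hA
  intro x hx y hy hxy
  rw [mem_inf'] at hy ⊢
  intro j hj
  simpa [min_eq_right hxy] using hNW j k (hk j (inf'_le C hj)) y (hy j hj) x hx

theorem IsNorthwest.hasNestedTraces (hNW : IsNorthwest C) : HasNestedTraces (columnMeets C) := by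
  intro P hP hPne
  -- take `D ∈ P` inside the column `C k` of largest index containing a member of `P`
  have hQ : {p ∈ P ×ˢ (univ : Finset (Fin r)) | p.1 ⊆ C p.2}.Nonempty := by
    obtain ⟨_, hD⟩ := hPne
    obtain ⟨S, ⟨j, hj⟩, rfl⟩ := hP hD
    exact ⟨(S.inf' ⟨j, hj⟩ C, j), by simpa [hD] using inf'_le C hj⟩
  obtain ⟨⟨D, k⟩, hDk, hmax⟩ := exists_max_image _ Prod.snd hQ
  simp only [mem_filter, mem_product, mem_univ, and_true] at hDk hmax
  have hlower : ∀ D' ∈ P, IsLowerIn (C k) D' := fun D' hD' =>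
    hNW.isLowerIn (hP hD') fun j hj => hmax (D', j) ⟨hD', hj⟩
  refine ⟨D, hDk.1, ?_⟩
  rintro _ ⟨D₁, hD₁, rfl⟩ _ ⟨D₂, hD₂, rfl⟩ -
  exact ((hlower D₁ hD₁).inter (hlower D hDk.1)).subset_or_subset
    ((hlower D₂ hD₂).inter (hlower D hDk.1)) (inter_subset_right.trans hDk.2)
    (inter_subset_right.trans hDk.2)

end Northwest

section CoveringMeet

variable {F : Type*} [Field F] {M : Type*} [AddCommGroup M] [Module F M] {r : ℕ}
  (C : Fin r → Finset ℕ) (W : Fin r → Submodule F M)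

-- a lift has `V_A ≤ V_{C_k} = W_k` whenever `A ⊆ C_k`
def coveringMeet (A : Finset ℕ) : Submodule F M :=
  ⨅ (k) (_ : A ⊆ C k), W k

theorem coveringMeet_mono {A B : Finset ℕ} (hAB : A ⊆ B) :
    coveringMeet C W A ≤ coveringMeet C W B :=
  le_iInf₂ fun k hk => iInf₂_le k (hAB.trans hk)

theorem coveringMeet_le {A : Finset ℕ} {j : Fin r} (hA : A ⊆ C j) : coveringMeet C W A ≤ W j :=
  iInf₂_le j hA

theorem card_le_finrank_coveringMeet
    (hinf : ∀ (S : Finset (Fin r)) (hS : S.Nonempty),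
      (S.inf' hS C).card ≤ finrank F ↥(⨅ j ∈ S, W j))
    {A : Finset ℕ} (hA : A ∈ columnMeets C) : #A ≤ finrank F (coveringMeet C W A) := by
  obtain ⟨S, hS, rfl⟩ := hA
  set K : Finset (Fin r) := {k | S.inf' hS C ⊆ C k}
  have hSK : S ⊆ K := fun j hj => by simpa [K] using inf'_le C hj
  have hKS : K.inf' (hS.mono hSK) C = S.inf' hS C :=
    le_antisymm (inf'_mono C hSK hS) (le_inf' _ _ fun k hk => (mem_filter.1 hk).2)
  have := hinf K (hS.mono hSK)
  rwa [hKS, show (⨅ j ∈ K, W j) = coveringMeet C W (S.inf' hS C) by simp [K, coveringMeet]]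
    at this

end CoveringMeet

theorem lift_configuration_to_blowup_general (F : Type) [Field F] (N r : ℕ)
    (C : Fin r → Finset ℕ) (hNW : IsNorthwest C)
    (W : Fin r → Submodule F (Fin N → F))
    (hdim : ∀ j, Module.finrank F (W j) = (C j).card)
    (hinf : ∀ (S : Finset (Fin r)) (hS : S.Nonempty),
      (S.inf' hS C).card ≤ Module.finrank F ↥(⨅ j ∈ S, W j)) :
    ∃ V : Finset ℕ → Submodule F (Fin N → F),
      (∀ (S : Finset (Fin r)) (hS : S.Nonempty),
        Module.finrank F (V (S.inf' hS C)) = (S.inf' hS C).card) ∧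
      (∀ j, V (C j) = W j) ∧
      (∀ (S S' : Finset (Fin r)) (hS : S.Nonempty) (hS' : S'.Nonempty),
        S.inf' hS C ⊆ S'.inf' hS' C → V (S.inf' hS C) ≤ V (S'.inf' hS' C)) := by
  obtain ⟨V, hV⟩ := exists_lift (columnMeets C) (coveringMeet C W)
    (fun _ hA _ hB => inter_mem_columnMeets C hA hB) hNW.hasNestedTraces
    (fun _ _ _ _ => coveringMeet_mono C W) (fun _ => card_le_finrank_coveringMeet C W hinf)
  refine ⟨V, fun S hS => (hV _ (inf'_mem_columnMeets C hS)).1, fun j => ?_,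
    fun S S' hS hS' => (hV _ (inf'_mem_columnMeets C hS)).2.2 _ (inf'_mem_columnMeets C hS')⟩
  obtain ⟨hVdim, hVle, -⟩ := hV (C j) (inf'_mem_columnMeets C (singleton_nonempty j))
  exact Submodule.eq_of_le_of_finrank_eq (hVle.trans (coveringMeet_le C W subset_rfl))
    (hVdim.trans (hdim j).symm)

/-- Proposition `conn fibers` (a), iterated: a configuration satisfying the intersection
conditions for a northwest diagram lifts to a full configuration for the blowup diagram
`D̂`: there are subspaces `V_Ĉ`, one for each intersection `Ĉ` of columns, of dimension
`|Ĉ|`, extending the given family and respecting inclusions. -/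
theorem lift_configuration_to_blowup (F : Type) [Field F] (N r : ℕ) (hN : 1 ≤ N)
    (C : Fin r → Finset ℕ) (hNW : IsNorthwest C)
    (hsub : ∀ j, C j ⊆ Finset.Icc 1 N)
    (W : Fin r → Submodule F (Fin N → F))
    (hdim : ∀ j, Module.finrank F (W j) = (C j).card)
    (hinf : ∀ (S : Finset (Fin r)) (hS : S.Nonempty),
      (S.inf' hS C).card ≤ Module.finrank F ↥(⨅ j ∈ S, W j)) :
    ∃ V : Finset ℕ → Submodule F (Fin N → F),
      (∀ (S : Finset (Fin r)) (hS : S.Nonempty),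
        Module.finrank F (V (S.inf' hS C)) = (S.inf' hS C).card) ∧
      (∀ j, V (C j) = W j) ∧
      (∀ (S S' : Finset (Fin r)) (hS : S.Nonempty) (hS' : S'.Nonempty),
        S.inf' hS C ⊆ S'.inf' hS' C → V (S.inf' hS C) ≤ V (S'.inf' hS' C)) :=
  lift_configuration_to_blowup_general F N r C hNW W hdim hinf
end

section
/- Let D = (C_1,…,C_r) be a northwest diagram with pairwise distinct columns. Then for all 1 ≤ j < j' ≤ r, either C_j <lex C_{j'}, or C_{j'} is an initial subset of C_j. -/
/-!
In a northwest diagram, if `j < j'`, `x ∈ C_{j'}` and `y ∈ C_j` with `x ≤ y`, then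
`x = min y x ∈ C_j`. Walking along the increasing enumerations of `C_j` and `C_{j'}`, the
first place where they differ therefore cannot carry a smaller entry in `C_{j'}`; so either
`C_j <lex C_{j'}`, or the enumeration of `C_{j'}` is a prefix of that of `C_j`, which for
distinct columns says that `C_{j'}` is an initial subset of `C_j`.
-/

theorem IsNorthwest.mem_of_le {r : ℕ} {C : Fin r → Finset ℕ} (hNW : IsNorthwest C)
    {a b : Fin r} (hab : a ≤ b) {x y : ℕ} (hx : x ∈ C b) (hy : y ∈ C a) (hxy : x ≤ y) :
    x ∈ C a := by
  simpa [min_eq_right hxy] using hNW a b hab y hy x hx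

theorem List.lex_lt_or_isPrefix_of_pairwise {α : Type*} [LinearOrder α] :
    ∀ {la lb : List α}, la.Pairwise (· < ·) → lb.Pairwise (· < ·) →
      (∀ x ∈ lb, ∀ y ∈ la, x ≤ y → x ∈ la) → List.Lex (· < ·) la lb ∨ lb <+: la
  | [], [], _, _, _ => Or.inr List.prefix_rfl
  | [], _ :: _, _, _, _ => Or.inl List.Lex.nil
  | _ :: _, [], _, _, _ => Or.inr List.nil_prefix
  | y :: la, x :: lb, hla, hlb, hclosed => by
    rcases lt_trichotomy x y with hxy | rfl | hyx
    · have hx : x ∈ y :: la := hclosed x mem_cons_self y mem_cons_self hxy.le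
      rcases mem_cons.mp hx with rfl | hx
      · exact absurd hxy (lt_irrefl x)
      · exact absurd (rel_of_pairwise_cons hla hx) hxy.not_gt
    · have hclosed' : ∀ z ∈ lb, ∀ w ∈ la, z ≤ w → z ∈ la := fun z hz w hw hzw =>
        (mem_cons.mp (hclosed z (mem_cons_of_mem _ hz) w (mem_cons_of_mem _ hw) hzw)).resolve_left
          (rel_of_pairwise_cons hlb hz).ne'
      exact (lex_lt_or_isPrefix_of_pairwise hla.of_cons hlb.of_cons hclosed').imp
        Lex.cons (prefix_cons_inj x).mpr
    · exact Or.inl (Lex.rel hyx)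

theorem lexLT_or_sort_isPrefix {A B : Finset ℕ} (hclosed : ∀ x ∈ B, ∀ y ∈ A, x ≤ y → x ∈ A) :
    LexLT A B ∨ B.sort (· ≤ ·) <+: A.sort (· ≤ ·) :=
  List.lex_lt_or_isPrefix_of_pairwise A.sortedLT_sort.pairwise B.sortedLT_sort.pairwise
    fun x hx y hy hxy => by
      simpa only [Finset.mem_sort] using hclosed x (by simpa using hx) y (by simpa using hy) hxy

theorem initSub_of_sort_isPrefix {A B : Finset ℕ} (hpre : B.sort (· ≤ ·) <+: A.sort (· ≤ ·))
    (hne : B ≠ A) : InitSub B A := by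
  obtain ⟨t, ht⟩ := hpre
  have hmemA : ∀ {x}, x ∈ A ↔ x ∈ B ∨ x ∈ t := by
    intro x
    rw [← Finset.mem_sort (· ≤ ·), ← ht, List.mem_append, Finset.mem_sort]
  have hBA : B ⊆ A := fun x hx => hmemA.mpr (Or.inl hx)
  refine ⟨hBA.ssubset_of_ne hne, fun x hx y hy => ?_⟩
  obtain ⟨hxA, hxB⟩ := Finset.mem_sdiff.mp hx
  have hsorted := A.sortedLT_sort.pairwise
  rw [← ht] at hsorted
  exact (List.pairwise_append.mp hsorted).2.2 y ((Finset.mem_sort _).mpr hy) x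
    ((hmemA.mp hxA).resolve_left hxB)

/-- Part (a) of the Lemma on lexicographic rearrangement: in a northwest diagram with
pairwise distinct columns, for `a < b` either `C a <lex C b` or `C b` is an initial
subset of `C a`. -/
theorem northwest_lex_or_initSub (r : ℕ) (C : Fin r → Finset ℕ)
    (hNW : IsNorthwest C) (hinj : Function.Injective C) :
    ∀ a b : Fin r, a < b → LexLT (C a) (C b) ∨ InitSub (C b) (C a) := by
  intro a b hab
  exact (lexLT_or_sort_isPrefix fun x hx y hy hxy => hNW.mem_of_le hab.le hx hy hxy).imp_right
    fun hpre => initSub_of_sort_isPrefix hpre (hinj.ne hab.ne')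
end

section
/- Let D = (C_1,…,C_r) be a northwest diagram with pairwise distinct columns. Then there is a permutation σ of {1,…,r} such that C_{σ(1)} <lex C_{σ(2)} <lex ⋯ <lex C_{σ(r)} and the rearranged diagram (C_{σ(1)},…,C_{σ(r)}) is again northwest. -/
/-
Sort the columns lexicographically. A pair of columns that the sort leaves in its original order
keeps the northwest property. For a pair `A <lex B` that the sort swaps, the northwest property of
the original order `(B, A)` says that `B` contains every element of `A` below one of its own, so the
first difference of the increasing lists of `A` and `B` cannot occur inside `A`: `A` is an initial
segment of `B`, and then `(A, B)` is northwest.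
-/

theorem List.Lex.isPrefix_of_min_mem {α : Type*} [LinearOrder α] {l₁ l₂ : List α}
    (hlex : List.Lex (· < ·) l₁ l₂) (h₁ : l₁.Pairwise (· < ·)) (h₂ : l₂.Pairwise (· < ·))
    (hmin : ∀ b ∈ l₂, ∀ a ∈ l₁, min b a ∈ l₂) : l₁ <+: l₂ := by
  induction hlex with
  | nil => exact List.nil_prefix
  | @cons a t₁ t₂ _ ih =>
    rw [List.pairwise_cons] at h₁ h₂
    refine List.cons_prefix_cons.2 ⟨rfl, ih h₁.2 h₂.2 fun b hb x hx => ?_⟩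
    have hgt : a < min b x := lt_min (h₂.1 b hb) (h₁.1 x hx)
    rcases List.mem_cons.1 (hmin b (.tail _ hb) x (.tail _ hx)) with h | h
    · exact absurd h hgt.ne'
    · exact h
  | @rel a t₁ b t₂ hab =>
    rw [List.pairwise_cons] at h₂
    have hmem := hmin b List.mem_cons_self a List.mem_cons_self
    rw [min_eq_right hab.le] at hmem
    rcases List.mem_cons.1 hmem with h | h
    · exact absurd h hab.ne
    · exact absurd (h₂.1 a h) (lt_asymm hab)

theorem min_mem_of_lexLT {A B : Finset ℕ} (hlex : LexLT A B)
    (hBA : ∀ i' ∈ B, ∀ i ∈ A, min i' i ∈ B) : ∀ i ∈ A, ∀ i' ∈ B, min i i' ∈ A := by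
  obtain ⟨s, hs⟩ : A.sort (· ≤ ·) <+: B.sort (· ≤ ·) :=
    hlex.isPrefix_of_min_mem (Finset.sortedLT_sort A).pairwise (Finset.sortedLT_sort B).pairwise
      (by simpa only [Finset.mem_sort] using hBA)
  have hsorted := (Finset.sortedLT_sort B).pairwise
  rw [← hs, List.pairwise_append] at hsorted
  intro i hi i' hi'
  have hi'l : i' ∈ A.sort (· ≤ ·) ++ s := hs ▸ (Finset.mem_sort _).2 hi'
  rcases List.mem_append.1 hi'l with h | h
  · rcases min_choice i i' with hm | hm <;> rw [hm]
    exacts [hi, (Finset.mem_sort _).1 h]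
  · rw [min_eq_left (hsorted.2.2 i ((Finset.mem_sort _).2 hi) i' h).le]
    exact hi

theorem exists_perm_isLex {r : ℕ} {C : Fin r → Finset ℕ} (hinj : Function.Injective C) :
    ∃ σ : Equiv.Perm (Fin r), IsLex (fun j => C (σ j)) := by
  let f : Fin r → List ℕ := fun j => (C j).sort (· ≤ ·)
  have hf : Function.Injective f := fun a b hab =>
    hinj <| by simpa only [f, Finset.sort_toFinset] using congrArg List.toFinset hab
  exact ⟨Tuple.sort f, fun a b hab =>
    (Tuple.monotone_sort f).strictMono_of_injective (hf.comp (Tuple.sort f).injective) hab⟩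

theorem IsNorthwest.comp_perm_of_isLex {r : ℕ} {C : Fin r → Finset ℕ} (hNW : IsNorthwest C)
    {σ : Equiv.Perm (Fin r)} (hlex : IsLex (fun j => C (σ j))) :
    IsNorthwest (fun j => C (σ j)) := by
  intro a b hab
  rcases le_or_gt (σ a) (σ b) with hσ | hσ
  · exact hNW _ _ hσ
  · have hlt : a < b := hab.lt_of_ne fun h => hσ.ne (by rw [h])
    exact min_mem_of_lexLT (hlex a b hlt) (hNW _ _ hσ.le)

/-- A northwest diagram with pairwise distinct columns can be rearranged into
lexicographic order, and the rearranged diagram is again northwest. -/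
theorem northwest_lex_rearrangement (r : ℕ) (C : Fin r → Finset ℕ)
    (hNW : IsNorthwest C) (hinj : Function.Injective C) :
    ∃ σ : Equiv.Perm (Fin r),
      IsLex (fun j => C (σ j)) ∧ IsNorthwest (fun j => C (σ j)) := by
  obtain ⟨σ, hlex⟩ := exists_perm_isLex hinj
  exact ⟨σ, hlex, hNW.comp_perm_of_isLex hlex⟩
end

section
/- Let D = (C_1,…,C_r) be a lexicographic northwest diagram, let 1 ≤ a < b ≤ r, and suppose C_a ∩ C_b is not equal to any column of D. Then the diagram obtained by inserting C_a ∩ C_b into the list of columns at its lexicographic position (i.e., the list consisting of C_1,…,C_r together with C_a ∩ C_b, arranged in lexicographic order) is again a lexicographic northwest diagram. -/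
/-!
`X = C a ∩ C b` is an initial subset of `C b` (northwest property of the pair `a ≤ b`), hence
`X <lex C b`. Since `X` is new, it has a slot in the lexicographic order, and inserting it there
keeps the list lexicographic. For the northwest property only pairs involving `X` matter. A column
`C u` before `X` has `u < b`, and `X ⊆ C b`. A column `C v` after `X` either has `b ≤ v`, and then
the northwest property passes to the intersection, or `v < b`; then `(C v, X)` is a northwest pair
and `X <lex C v`, which forces `(X, C v)` to be one as well.
-/

theorem isLex_iff_strictMono {r : ℕ} {C : Fin r → Finset ℕ} :
    IsLex C ↔ StrictMono fun j => (C j).sort (· ≤ ·) :=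
  Iff.rfl

theorem LexLT.trans {A B D : Finset ℕ} (hAB : LexLT A B) (hBD : LexLT B D) : LexLT A D :=
  lt_trans (α := List ℕ) hAB hBD

theorem LexLT.asymm {A B : Finset ℕ} (h : LexLT A B) : ¬ LexLT B A :=
  lt_asymm (α := List ℕ) h

theorem Finset.sort_injective {α : Type*} [LinearOrder α] :
    Function.Injective fun A : Finset α => A.sort (· ≤ ·) := fun A B h => by
  rw [← Finset.sort_toFinset A (· ≤ ·), ← Finset.sort_toFinset B (· ≤ ·)]
  exact congrArg List.toFinset h

theorem Finset.sort_eq_sort_filter_lt_append {α : Type*} [LinearOrder α] (A : Finset α) (c : α) :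
    A.sort (· ≤ ·) = (A.filter (· < c)).sort (· ≤ ·) ++ (A.filter (¬ · < c)).sort (· ≤ ·) := by
  refine List.Perm.eq_of_pairwise' (Finset.pairwise_sort _ _) ?_ ?_
  · refine List.pairwise_append.2 ⟨Finset.pairwise_sort _ _, Finset.pairwise_sort _ _, ?_⟩
    simp only [Finset.mem_sort, Finset.mem_filter, not_lt]
    exact fun x hx y hy => (hx.2.trans_le hy.2).le
  · rw [← Multiset.coe_eq_coe, ← Multiset.coe_add, Finset.sort_eq, Finset.sort_eq, Finset.sort_eq,
      Finset.filter_val, Finset.filter_val, Multiset.filter_add_not]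

theorem List.lex_lt_of_mem_of_forall_lt {α : Type*} [Preorder α] {l₁ l₂ : List α} {a : α}
    (h₁ : l₁.Pairwise (· ≤ ·)) (ha : a ∈ l₁) (h₂ : l₂ ≠ []) (hlt : ∀ y ∈ l₂, a < y) :
    List.Lex (· < ·) l₁ l₂ := by
  obtain _ | ⟨x, t₁⟩ := l₁
  · simp at ha
  obtain _ | ⟨y, t₂⟩ := l₂
  · exact absurd rfl h₂
  have hxa : x ≤ a := by
    rcases List.mem_cons.1 ha with rfl | ha
    · exact le_rfl
    · exact List.rel_of_pairwise_cons h₁ ha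
  exact List.Lex.rel (hxa.trans_lt (hlt y List.mem_cons_self))

theorem lexLT_filter_lt_self {B : Finset ℕ} {c : ℕ} (hc : c ∈ B) : LexLT (B.filter (· < c)) B := by
  unfold LexLT
  rw [Finset.sort_eq_sort_filter_lt_append B c]
  conv_lhs => rw [← List.append_nil ((B.filter (· < c)).sort (· ≤ ·))]
  refine List.Lex.append_left _ ?_ _
  obtain ⟨y, t, hB⟩ := List.exists_cons_of_ne_nil
    (List.ne_nil_of_mem (a := c) (by simpa using hc) : (B.filter (¬ · < c)).sort (· ≤ ·) ≠ [])
  rw [hB]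
  exact List.Lex.nil

theorem lexLT_of_initSub {A B : Finset ℕ} (h : InitSub A B) : LexLT A B := by
  obtain ⟨hAB, hgt⟩ := h
  have hne : (B \ A).Nonempty := Finset.sdiff_nonempty.2 hAB.not_subset
  obtain ⟨hcB, hcA⟩ := Finset.mem_sdiff.1 ((B \ A).min'_mem hne)
  suffices A = B.filter (· < (B \ A).min' hne) from this ▸ lexLT_filter_lt_self hcB
  ext y
  simp only [Finset.mem_filter]
  refine ⟨fun hy => ⟨hAB.subset hy, hgt _ ((B \ A).min'_mem hne) y hy⟩, fun ⟨hyB, hyc⟩ => ?_⟩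
  by_contra hyA
  exact (hyc.trans_le ((B \ A).min'_le y (Finset.mem_sdiff.2 ⟨hyB, hyA⟩))).false

theorem lexLT_of_filter_lt_eq {A B : Finset ℕ} {c x : ℕ} (hcB : c ∈ B) (hcA : c ∉ A)
    (hagree : A.filter (· < c) = B.filter (· < c)) (hxA : x ∈ A) (hcx : c < x) : LexLT B A := by
  unfold LexLT
  rw [Finset.sort_eq_sort_filter_lt_append A c, Finset.sort_eq_sort_filter_lt_append B c, hagree]
  refine List.Lex.append_left _ (List.lex_lt_of_mem_of_forall_lt (a := c)
    (Finset.pairwise_sort _ _) (by simpa using hcB) ?_ ?_) _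
  · exact List.ne_nil_of_mem (a := x) (by simpa using ⟨hxA, hcx.le⟩)
  · simp only [Finset.mem_sort, Finset.mem_filter, not_lt]
    exact fun y hy => lt_of_le_of_ne hy.2 fun h => hcA (h ▸ hy.1)

def NorthwestPair (A B : Finset ℕ) : Prop :=
  ∀ i ∈ A, ∀ i' ∈ B, min i i' ∈ A

theorem northwestPair_self (A : Finset ℕ) : NorthwestPair A A := by
  intro i hi i' hi'
  rcases min_choice i i' with h | h <;> rw [h] <;> assumption

theorem NorthwestPair.mono_right {A B B' : Finset ℕ} (h : NorthwestPair A B) (hB : B' ⊆ B) :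
    NorthwestPair A B' :=
  fun i hi i' hi' => h i hi i' (hB hi')

theorem NorthwestPair.inter_left {A A' B : Finset ℕ} (h : NorthwestPair A B)
    (h' : NorthwestPair A' B) : NorthwestPair (A ∩ A') B := by
  intro i hi i' hi'
  rw [Finset.mem_inter] at hi ⊢
  exact ⟨h i hi.1 i' hi', h' i hi.2 i' hi'⟩

theorem NorthwestPair.initSub_inter {A B : Finset ℕ} (h : NorthwestPair A B) (hne : A ∩ B ≠ B) :
    InitSub (A ∩ B) B := by
  refine ⟨Finset.ssubset_iff_subset_ne.2 ⟨Finset.inter_subset_right, hne⟩, fun x hx y hy => ?_⟩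
  obtain ⟨hxB, hxAB⟩ := Finset.mem_sdiff.1 hx
  obtain ⟨hyA, -⟩ := Finset.mem_inter.1 hy
  by_contra! hxy
  have hxA : x ∈ A := min_eq_right hxy ▸ h y hyA x hxB
  exact hxAB (Finset.mem_inter.2 ⟨hxA, hxB⟩)

/-- An element of `V \ X` below some element of `X` would make the first difference between `X`
and `V` an element of `V`, forcing `V <lex X`. -/
theorem NorthwestPair.symm_of_lexLT {X V : Finset ℕ} (hVX : NorthwestPair V X) (hXV : LexLT X V) :
    NorthwestPair X V := by
  intro i hi i' hi'
  rcases le_total i i' with hii' | hi'i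
  · rwa [min_eq_left hii']
  rw [min_eq_right hi'i]
  by_contra hi'X
  set S : Set ℕ := {c | c ∈ V ∧ c ∉ X ∧ ∃ x ∈ X, c < x}
  have hclose : ∀ x ∈ X, ∀ c ∈ V, x < c → x ∈ V := fun x hx c hc hxc =>
    min_eq_right hxc.le ▸ hVX c hc x hx
  obtain ⟨c, ⟨hcV, hcX, x, hxX, hcx⟩, hmin⟩ := wellFounded_lt.has_min S
    ⟨i', hi', hi'X, i, hi, lt_of_le_of_ne hi'i fun h => hi'X (h ▸ hi)⟩
  refine hXV.asymm (lexLT_of_filter_lt_eq hcV hcX ?_ hxX hcx)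
  ext y
  simp only [Finset.mem_filter, and_congr_left_iff]
  refine fun hyc => ⟨fun hy => hclose y hy c hcV hyc, fun hy => ?_⟩
  by_contra hyX
  exact hmin y ⟨hy, hyX, x, hxX, hyc.trans hcx⟩ hyc

theorem Fin.exists_strictMono_insertNth {α : Type*} [LinearOrder α] {n : ℕ} {f : Fin n → α}
    (hf : StrictMono f) {x : α} (hx : x ∉ Set.range f) :
    ∃ q : Fin (n + 1), StrictMono (q.insertNth x f) := by
  classical
  set k := (Finset.univ.filter fun i => f i < x).card
  have hk : ∀ i, f i < x ↔ (i : ℕ) < k := by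
    intro i
    constructor
    · intro hi
      have hsub : Finset.Iic i ⊆ Finset.univ.filter fun j => f j < x := fun j hj =>
        Finset.mem_filter.2 ⟨Finset.mem_univ j, (hf.monotone (Finset.mem_Iic.1 hj)).trans_lt hi⟩
      simpa using Finset.card_le_card hsub
    · intro hi
      by_contra hxi
      have hsub : (Finset.univ.filter fun j => f j < x) ⊆ Finset.Iio i := fun j hj =>
        Finset.mem_Iio.2 (hf.lt_iff_lt.1 ((Finset.mem_filter.1 hj).2.trans_le (not_lt.1 hxi)))
      exact (not_lt.2 (by simpa using Finset.card_le_card hsub)) hi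
  refine ⟨⟨k, Nat.lt_succ_of_le ((Finset.card_filter_le _ _).trans_eq (Finset.card_fin n))⟩,
    (Fin.strictMono_insertNth_iff _ _ _).2 ⟨hf, fun i hi => (hk i).2 hi, fun i hi => ?_⟩⟩
  exact lt_of_le_of_ne (not_lt.1 fun h => (not_lt.2 hi) ((hk i).1 h)) fun h => hx ⟨i, h.symm⟩

theorem IsLex.exists_isLex_insertNth {r : ℕ} {C : Fin r → Finset ℕ} (hC : IsLex C) {X : Finset ℕ}
    (hX : ∀ j, X ≠ C j) : ∃ p : Fin (r + 1), IsLex (p.insertNth X C) := by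
  obtain ⟨p, hp⟩ := Fin.exists_strictMono_insertNth (isLex_iff_strictMono.1 hC)
    (x := X.sort (· ≤ ·)) fun ⟨j, hj⟩ => hX j (Finset.sort_injective hj).symm
  refine ⟨p, isLex_iff_strictMono.2 ?_⟩
  convert hp using 1
  funext j
  cases j using Fin.succAboveCases p <;> simp

theorem Fin.univ_val_map_insertNth {β : Type*} {n : ℕ} (p : Fin (n + 1)) (x : β) (f : Fin n → β) :
    Finset.univ.val.map (p.insertNth x f) = x ::ₘ Finset.univ.val.map f := by
  rw [Fin.univ_succAbove n p, Finset.cons_val, Multiset.map_cons, Fin.insertNth_apply_same,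
    Finset.map_val, Multiset.map_map]
  congr 1
  exact Multiset.map_congr rfl fun j _ => by simp

theorem IsLex.lt_of_lexLT {r : ℕ} {C : Fin r → Finset ℕ} (hC : IsLex C) {X : Finset ℕ} {u b : Fin r}
    (hu : LexLT (C u) X) (hb : LexLT X (C b)) : u < b := by
  by_contra! hbu
  rcases hbu.eq_or_lt with rfl | hbu
  · exact hu.asymm hb
  · exact (hC b u hbu).asymm (hu.trans hb)

section Blowup

variable {r : ℕ} {C : Fin r → Finset ℕ} {a b : Fin r}

theorem IsNorthwest.lexLT_inter (hNW : IsNorthwest C) (hab : a ≤ b) (hne : C a ∩ C b ≠ C b) :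
    LexLT (C a ∩ C b) (C b) :=
  lexLT_of_initSub (NorthwestPair.initSub_inter (hNW a b hab) hne)

theorem IsNorthwest.northwestPair_inter_left (hNW : IsNorthwest C) (hab : a < b) {v : Fin r}
    (hv : LexLT (C a ∩ C b) (C v)) : NorthwestPair (C a ∩ C b) (C v) := by
  rcases le_or_gt b v with hbv | hvb
  · exact NorthwestPair.inter_left (hNW a v (hab.le.trans hbv)) (hNW b v hbv)
  · exact NorthwestPair.symm_of_lexLT
      (NorthwestPair.mono_right (hNW v b hvb.le) Finset.inter_subset_right) hv

theorem IsNorthwest.northwestPair_inter_right (hNW : IsNorthwest C) (hlex : IsLex C)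
    (hab : a < b) (hnew : C a ∩ C b ≠ C b) {u : Fin r} (hu : LexLT (C u) (C a ∩ C b)) :
    NorthwestPair (C u) (C a ∩ C b) :=
  NorthwestPair.mono_right (hNW u b (hlex.lt_of_lexLT hu (hNW.lexLT_inter hab.le hnew)).le)
    Finset.inter_subset_right

theorem IsNorthwest.insertNth_inter (hNW : IsNorthwest C) (hlex : IsLex C) (hab : a < b)
    (hnew : C a ∩ C b ≠ C b) {p : Fin (r + 1)} (hE : IsLex (p.insertNth (C a ∩ C b) C)) :
    IsNorthwest (p.insertNth (C a ∩ C b) C) := by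
  intro j j' hjj'
  cases j using Fin.succAboveCases p with
  | x =>
    cases j' using Fin.succAboveCases p with
    | x =>
      simp only [Fin.insertNth_apply_same]
      exact northwestPair_self (C a ∩ C b)
    | p v =>
      have hlt := hE _ _ (hjj'.lt_of_ne (Fin.succAbove_ne p v).symm)
      simp only [Fin.insertNth_apply_same, Fin.insertNth_apply_succAbove] at hlt ⊢
      exact hNW.northwestPair_inter_left hab hlt
  | p u =>
    cases j' using Fin.succAboveCases p with
    | x =>
      have hlt := hE _ _ (hjj'.lt_of_ne (Fin.succAbove_ne p u))
      simp only [Fin.insertNth_apply_same, Fin.insertNth_apply_succAbove] at hlt ⊢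
      exact hNW.northwestPair_inter_right hlex hab hnew hlt
    | p v =>
      simp only [Fin.insertNth_apply_succAbove]
      exact hNW u v (Fin.succAbove_le_succAbove_iff.1 hjj')

end Blowup

/-- Inserting the intersection `C a ∩ C b` of two columns of a lexicographic northwest
diagram (when it is not already a column) at its lexicographic position yields again a
lexicographic northwest diagram. -/
theorem blowup_lex_northwest (r : ℕ) (C : Fin r → Finset ℕ)
    (hNW : IsNorthwest C) (hlex : IsLex C) (a b : Fin r) (hab : a < b)
    (hnew : ∀ j, C a ∩ C b ≠ C j) :
    ∃ E : Fin (r + 1) → Finset ℕ,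
      (Finset.univ.val.map E = (C a ∩ C b) ::ₘ Finset.univ.val.map C) ∧
      IsLex E ∧ IsNorthwest E := by
  obtain ⟨p, hp⟩ := hlex.exists_isLex_insertNth hnew
  exact ⟨p.insertNth (C a ∩ C b) C, Fin.univ_val_map_insertNth p _ C, hp,
    hNW.insertNth_inter hlex hab (hnew b) hp⟩
end

section
/- Let D = (C_1,…,C_r) be a lexicographic northwest diagram with r ≥ 2. Then there exists an index l with 1 ≤ l ≤ r−1 such that (⋃_{j=1}^{r−1} C_j) ∩ C_r = C_l ∩ C_r. -/
/-- Lemma `maxmin` (a): in a lexicographic northwest diagram with `r ≥ 2` columns,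
there is a column `C l` with `l < r - 1` (i.e. `C l` is not the last column) such that
`(⋃_{j < r-1} C j) ∩ C_{r-1} = C l ∩ C_{r-1}` (indices `0`-based, so `C ⟨r-1,_⟩` is the
last column). -/
theorem union_inter_last_eq_single_inter (r : ℕ) (hr : 2 ≤ r)
    (C : Fin r → Finset ℕ) (hNW : IsNorthwest C) (hlex : IsLex C) :
    ∃ l : Fin r, (l : ℕ) < r - 1 ∧
      ((Finset.univ.filter (fun j : Fin r => (j : ℕ) < r - 1)).sup C) ∩ C ⟨r - 1, by omega⟩
        = C l ∩ C ⟨r - 1, by omega⟩ := by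
  set last : Fin r := ⟨r - 1, by omega⟩ with hlast
  set B : Finset ℕ := C last with hB
  set T : Finset (Fin r) := Finset.univ.filter (fun j : Fin r => (j : ℕ) < r - 1) with hT
  -- key property: if i' ∈ B, i ∈ C j, i' ≤ i, j ∈ T then i' ∈ C j
  have key : ∀ j ∈ T, ∀ i ∈ C j, ∀ i' ∈ B, i' ≤ i → i' ∈ C j := by
    intro j hj i hi i' hi' hle
    have hjle : j ≤ last := by
      simp only [hT, Finset.mem_filter] at hj
      exact le_of_lt (Fin.mk_lt_mk.mpr hj.2 : j < last)
    have := hNW j last hjle i hi i' hi'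
    rwa [min_eq_right hle] at this
  -- the intersections form a chain
  have chain : ∀ j ∈ T, ∀ k ∈ T, C j ∩ B ⊆ C k ∩ B ∨ C k ∩ B ⊆ C j ∩ B := by
    intro j hj k hk
    by_cases h : C j ∩ B ⊆ C k ∩ B
    · exact Or.inl h
    · right
      obtain ⟨x, hxj, hxk⟩ := Finset.not_subset.mp h
      rw [Finset.mem_inter] at hxj
      intro y hy
      rw [Finset.mem_inter] at hy ⊢
      refine ⟨?_, hy.2⟩
      rcases le_total y x with hle | hle
      · exact key j hj x hxj.1 y hy.2 hle
      · exact absurd (Finset.mem_inter.mpr ⟨key k hk y hy.1 x hxj.2 hle, hxj.2⟩) hxk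
  have hTne : T.Nonempty := ⟨⟨0, by omega⟩, by simp [hT]; omega⟩
  obtain ⟨l, hlT, hlmax⟩ := T.exists_max_image (fun j => (C j ∩ B).card) hTne
  have hlT' : (l : ℕ) < r - 1 := by simpa [hT] using hlT
  refine ⟨l, hlT', ?_⟩
  apply Finset.Subset.antisymm
  · intro x hx
    rw [Finset.mem_inter] at hx
    obtain ⟨j, hjT, hxj⟩ := Finset.mem_sup.mp hx.1
    have hxjB : x ∈ C j ∩ B := Finset.mem_inter.mpr ⟨hxj, hx.2⟩
    rcases chain j hjT l hlT with h | h
    · exact h hxjB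
    · have := Finset.eq_of_subset_of_card_le h (hlmax j hjT)
      rw [this]; exact hxjB
  · exact Finset.inter_subset_inter_right (Finset.le_sup hlT)
end

section
/- Let N ≥ 1 and let D = (C_1,…,C_r) be a northwest diagram with all columns contained in {1,…,N}. Then there exist permutations u_1,…,u_r of {1,…,N} such that, setting u_0 = identity: (α) ℓ(u_j) = ℓ(u_{j−1}) + ℓ(u_{j−1}^{−1} ∘ u_j) for all 1 ≤ j ≤ r, and (β) u_j({1,2,…,|C_j|}) = C_j for all 1 ≤ j ≤ r. -/
/-- The Coxeter length of a permutation of `Fin N` : the number of inversions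
`#{(i,j) : i < j, u i > u j}`. -/
def invLen {N : ℕ} (u : Equiv.Perm (Fin N)) : ℕ :=
  (Finset.univ.filter (fun p : Fin N × Fin N => p.1 < p.2 ∧ u p.2 < u p.1)).card

/-!
Build `u j` from `u (j - 1)` by stably moving the entries of `C j` to the front of its one-line
word; this gives (β). By induction, every inversion `a < b` of `u (j - 1)` (with `b` written
before `a`) was created at some earlier step `i`, so `b ∈ C i` and `a ∉ C i`. The northwest
condition then forbids `a ∈ C j`, so the step to `u j` never undoes an inversion of
`u (j - 1)`, which is exactly the length additivity (α).
-/

open Finset Equiv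

lemma invLen_mul {N : ℕ} (w x : Perm (Fin N))
    (h : ∀ i k, i < k → x k < x i → w (x k) < w (x i)) :
    invLen (w * x) = invLen w + invLen x := by
  set kept := univ.filter fun p : Fin N × Fin N =>
    p.1 < p.2 ∧ x p.1 < x p.2 ∧ w (x p.2) < w (x p.1)
  have hsplit : (univ.filter fun p : Fin N × Fin N => p.1 < p.2 ∧ (w * x) p.2 < (w * x) p.1)
      = kept ∪ univ.filter fun p : Fin N × Fin N => p.1 < p.2 ∧ x p.2 < x p.1 := by
    ext ⟨i, k⟩
    simp only [kept, mem_filter, mem_union, mem_univ, true_and, Perm.mul_apply]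
    rcases lt_trichotomy (x i) (x k) with hx | hx | hx
    · grind
    · grind [x.injective hx]
    · grind
  have hdisj : Disjoint kept (univ.filter fun p : Fin N × Fin N => p.1 < p.2 ∧ x p.2 < x p.1) :=
    disjoint_filter.mpr fun _ _ hp hq => hp.2.1.asymm hq.2
  have hrelabel : #kept = invLen w := by
    refine card_nbij' (fun p => (x p.1, x p.2)) (fun q => (x⁻¹ q.1, x⁻¹ q.2)) ?_ ?_ ?_ ?_
    · intro p hp
      simp_all [kept]
    · rintro ⟨a, b⟩ hq
      simp only [kept, mem_coe, mem_filter, mem_univ, true_and, Perm.coe_inv,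
        apply_symm_apply] at hq ⊢
      refine ⟨lt_of_not_ge fun hle => ?_, hq⟩
      have hlt : x.symm b < x.symm a := hle.lt_of_ne (x.symm.injective.ne hq.1.ne')
      have := h _ _ hlt
      simp only [apply_symm_apply] at this
      exact (this hq.1).asymm hq.2
    · intro p _
      simp
    · intro q _
      simp
  rw [invLen, hsplit, card_union_of_disjoint hdisj, hrelabel]
  rfl

lemma Fin.mem_iff_lt_card_of_isLowerSet {n : ℕ} {s : Finset (Fin n)}
    (hs : IsLowerSet (s : Set (Fin n))) (i : Fin n) : i ∈ s ↔ (i : ℕ) < #s := by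
  constructor
  · intro hi
    have := card_le_card (s := Iic i) fun j hj => hs (mem_Iic.mp hj) hi
    rw [Fin.card_Iic] at this
    omega
  · intro hi
    by_contra hni
    have := card_le_card (t := Iio i) fun j hj =>
      mem_Iio.mpr (lt_of_not_ge fun hij => hni (hs hij hj))
    rw [Fin.card_Iio] at this
    omega

section stablePartition

variable {N : ℕ} (p : Fin N → Prop) [DecidablePred p] (w : Perm (Fin N))

/-- Rearranges the word `w 0, w 1, …, w (N-1)` so that the values satisfying `p` come first,
keeping the relative order within both blocks. -/
def stablePartition : Perm (Fin N) :=
  Tuple.sort fun v => toLex (decide ¬ p v, w⁻¹ v)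

lemma stablePartition_inv_lt_inv_iff {v v' : Fin N} :
    (stablePartition p w)⁻¹ v < (stablePartition p w)⁻¹ v' ↔
      p v ∧ ¬ p v' ∨ (p v ↔ p v') ∧ w⁻¹ v < w⁻¹ v' := by
  rw [stablePartition]
  set key : Fin N → Bool ×ₗ Fin N := fun v => toLex (decide ¬ p v, w⁻¹ v)
  have hkey : Function.Injective key := fun a b hab =>
    w⁻¹.injective (congrArg Prod.snd (toLex.injective hab))
  have hmono : StrictMono (key ∘ Tuple.sort key) :=
    (Tuple.monotone_sort key).strictMono_of_injective (hkey.comp (Tuple.sort key).injective)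
  have := hmono.lt_iff_lt (a := (Tuple.sort key)⁻¹ v) (b := (Tuple.sort key)⁻¹ v')
  simp only [Function.comp_apply, Perm.coe_inv, apply_symm_apply] at this
  rw [Perm.coe_inv, Perm.coe_inv, ← this, Prod.Lex.toLex_lt_toLex]
  by_cases hv : p v <;> by_cases hv' : p v' <;> simp [hv, hv']

lemma stablePartition_apply_iff (i : Fin N) :
    p (stablePartition p w i) ↔ (i : ℕ) < #{v | p v} := by
  set σ := stablePartition p w
  have hlower : IsLowerSet (↑({i | p (σ i)} : Finset (Fin N)) : Set (Fin N)) := by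
    intro i' i hle hi'
    simp only [mem_coe, mem_filter, mem_univ, true_and] at hi' ⊢
    by_contra hi
    have := (stablePartition_inv_lt_inv_iff p w (v := σ i') (v' := σ i)).mpr (.inl ⟨hi', hi⟩)
    simp only [σ, Perm.coe_inv, symm_apply_apply] at this
    exact this.not_ge hle
  have hcard : #{i | p (σ i)} = #{v | p v} := card_equiv σ (by simp)
  rw [← hcard, ← Fin.mem_iff_lt_card_of_isLowerSet hlower]
  simp

lemma image_stablePartition_filter_lt_card :
    Finset.image (stablePartition p w) {i | (i : ℕ) < #{v | p v}} =
      ({v | p v} : Finset (Fin N)) := by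
  ext v
  simp only [mem_image, mem_filter, mem_univ, true_and, ← stablePartition_apply_iff p w]
  exact ⟨fun ⟨i, hi, hiv⟩ => hiv ▸ hi,
    fun hv => ⟨(stablePartition p w)⁻¹ v, by simpa, by simp⟩⟩

lemma invLen_stablePartition (h : ∀ a b, a < b → w⁻¹ b < w⁻¹ a → ¬ p a) :
    invLen (stablePartition p w) = invLen w + invLen (w⁻¹ * stablePartition p w) := by
  set σ := stablePartition p w
  conv_lhs => rw [← mul_inv_cancel_left w σ]
  refine invLen_mul _ _ fun i k hik hx => ?_
  simp only [Perm.mul_apply, Perm.coe_inv, apply_symm_apply] at hx ⊢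
  have hik' : σ⁻¹ (σ i) < σ⁻¹ (σ k) := by simpa using hik
  rcases (stablePartition_inv_lt_inv_iff p w).mp hik' with ⟨hpi, -⟩ | ⟨-, hlt⟩
  · by_contra! hle
    exact h _ _ (hle.lt_of_ne (σ.injective.ne hik.ne)) hx hpi
  · exact absurd hx hlt.asymm

end stablePartition

lemma image_succ_filter_succ_mem {N : ℕ} {S : Finset ℕ} (hS : S ⊆ Icc 1 N) :
    image (fun v : Fin N => (v : ℕ) + 1) {v | (v : ℕ) + 1 ∈ S} = S := by
  ext m
  simp only [mem_image, mem_filter, mem_univ, true_and]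
  refine ⟨fun ⟨v, hv, hvm⟩ => hvm ▸ hv, fun hm => ?_⟩
  have := mem_Icc.mp (hS hm)
  exact ⟨⟨m - 1, by omega⟩, by simpa [Nat.sub_add_cancel this.1] using hm, by simp; omega⟩

lemma card_filter_succ_mem {N : ℕ} {S : Finset ℕ} (hS : S ⊆ Icc 1 N) :
    #{v : Fin N | (v : ℕ) + 1 ∈ S} = #S := by
  conv_rhs => rw [← image_succ_filter_succ_mem hS]
  exact (card_image_of_injective _ fun _ _ h => Fin.ext (by omega)).symm

section columnSort

variable {N r : ℕ} (C : Fin r → Finset ℕ)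

def columnSort : ℕ → Perm (Fin N)
  | 0 => 1
  | j + 1 =>
    if h : j < r then
      stablePartition (fun v : Fin N => (v : ℕ) + 1 ∈ C ⟨j, h⟩) (columnSort j)
    else
      columnSort j

lemma columnSort_succ (j : Fin r) :
    columnSort (N := N) C (j + 1) =
      stablePartition (fun v : Fin N => (v : ℕ) + 1 ∈ C j) (columnSort C j) := by
  simp [columnSort]

lemma exists_column_of_inversion (j : ℕ) {a b : Fin N} (hab : a < b)
    (h : (columnSort C j)⁻¹ b < (columnSort C j)⁻¹ a) :
    ∃ i : Fin r, (i : ℕ) < j ∧ (b : ℕ) + 1 ∈ C i ∧ (a : ℕ) + 1 ∉ C i := by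
  induction j with
  | zero => exact absurd hab (by simpa [columnSort] using h.not_gt)
  | succ j ih =>
    by_cases hj : j < r
    · rw [columnSort, dif_pos hj, stablePartition_inv_lt_inv_iff] at h
      rcases h with ⟨hb, ha⟩ | ⟨-, h⟩
      · exact ⟨⟨j, hj⟩, j.lt_succ_self, hb, ha⟩
      · obtain ⟨i, hi, hb, ha⟩ := ih h
        exact ⟨i, by omega, hb, ha⟩
    · rw [columnSort, dif_neg hj] at h
      obtain ⟨i, hi, hb, ha⟩ := ih h
      exact ⟨i, by omega, hb, ha⟩

lemma not_mem_of_inversion (hNW : IsNorthwest C) (j : Fin r) {a b : Fin N} (hab : a < b)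
    (h : (columnSort C j)⁻¹ b < (columnSort C j)⁻¹ a) : (a : ℕ) + 1 ∉ C j := by
  obtain ⟨i, hij, hb, ha⟩ := exists_column_of_inversion C j hab h
  intro ha'
  have := hNW i j (Fin.le_of_lt hij) _ hb _ ha'
  rw [min_eq_right (by simpa using hab.le)] at this
  exact ha this

end columnSort

/-- For a northwest diagram with columns in `{1,…,N}` there is a monotone (in the weak
Bruhat order) sequence of permutations `u_1,…,u_r` of `{1,…,N}` (encoded on `Fin N`,
with `k : Fin N` standing for `k+1`, and `u 0 = id`), i.e.
`ℓ(u_j) = ℓ(u_{j-1}) + ℓ(u_{j-1}⁻¹ u_j)`, such that `u_j({1,…,|C_j|}) = C_j`. -/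
theorem monotone_sequence_of_permutations (N r : ℕ)
    (C : Fin r → Finset ℕ) (hNW : IsNorthwest C)
    (hsub : ∀ j, C j ⊆ Finset.Icc 1 N) :
    ∃ u : ℕ → Equiv.Perm (Fin N), u 0 = 1 ∧
      ∀ (j : ℕ) (h1 : 1 ≤ j) (h2 : j ≤ r),
        invLen (u j) = invLen (u (j - 1)) + invLen ((u (j - 1))⁻¹ * u j) ∧
        Finset.image (fun k : Fin N => ((u j) k : ℕ) + 1)
            (Finset.univ.filter (fun k : Fin N => (k : ℕ) < (C ⟨j - 1, by omega⟩).card))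
          = C ⟨j - 1, by omega⟩ := by
  refine ⟨columnSort C, rfl, fun j h1 h2 => ?_⟩
  obtain ⟨j, rfl⟩ : ∃ j' : Fin r, j = j' + 1 := ⟨⟨j - 1, by omega⟩, by simp; omega⟩
  simp only [Nat.add_sub_cancel, Fin.eta, columnSort_succ]
  refine ⟨invLen_stablePartition _ _ fun a b hab h => not_mem_of_inversion C hNW j hab h, ?_⟩
  conv_rhs => rw [← image_succ_filter_succ_mem (hsub j),
    ← image_stablePartition_filter_lt_card _ (columnSort C j), image_image]
  rw [card_filter_succ_mem (hsub j)]
  rfl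
end

section
/- Let F be an infinite field, N ≥ 1, and let D = (C_1,…,C_r) be a diagram with pairwise distinct columns contained in {1,…,N} that is closed under intersections (for every nonempty S ⊆ {1,…,r}, the set ⋂_{j∈S} C_j equals some column of D). Let V_1,…,V_r be subspaces of F^N with dim V_j = |C_j| for all j and V_j ⊆ V_k whenever C_j ⊆ C_k. Then the following are equivalent: (i) each V_j is invariant under every invertible diagonal N × N matrix over F; (ii) there is a standard column tabloid t for D, i.e. an assignment to each column C_j of a subset t(C_j) ⊆ {1,…,N} with |t(C_j)| = |C_j| such that C_j ⊆ C_k implies t(C_j) ⊆ t(C_k), with V_j = span{e_i : i ∈ t(C_j)} for all j, where e_1,…,e_N is the standard basis of F^N. -/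
/-!
Over a field with more than two elements every diagonal matrix is a difference of two invertible
ones, so a subspace of `F^N` stable under the invertible diagonal matrices is stable under all
of them, in particular under the coordinate projections. It is therefore spanned by the standard
basis vectors it contains, and the index sets `t j` of these vectors form the tabloid: `|t j|` is
`dim V j`, and `t` is monotone because `V` is.
-/

open Submodule Module

variable {F ι : Type*} [Field F]

theorem Submodule.mul_mem_of_forall_ne_zero [Infinite F] {V : Submodule F (ι → F)}
    (hV : ∀ x : ι → F, (∀ i, x i ≠ 0) → ∀ v ∈ V, x * v ∈ V) (d : ι → F) {v : ι → F}
    (hv : v ∈ V) : d * v ∈ V := by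
  classical
  have hdiff : ∀ i, ∃ a : F, a ≠ 0 ∧ a - d i ≠ 0 := fun i => by
    obtain ⟨a, ha⟩ := Infinite.exists_notMem_finset ({0, d i} : Finset F)
    simp only [Finset.mem_insert, Finset.mem_singleton, not_or] at ha
    exact ⟨a, ha.1, sub_ne_zero.mpr ha.2⟩
  choose x hx hxd using hdiff
  have : d * v = x * v - (x - d) * v := by ring
  rw [this]
  exact sub_mem (hV x hx v hv) (hV (x - d) hxd v hv)

variable [DecidableEq ι]

variable (F) in
def coordSubspace (s : Set ι) : Submodule F (ι → F) :=
  span F ((fun i => Pi.single i 1) '' s)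

theorem Pi.single_eq_smul_single_one (i : ι) (a : F) :
    (Pi.single i a : ι → F) = a • Pi.single i 1 := by
  rw [← Pi.single_smul', smul_eq_mul, mul_one]

theorem single_mem_coordSubspace {s : Set ι} {i : ι} (hi : i ∈ s) (a : F) :
    Pi.single i a ∈ coordSubspace F s := by
  rw [Pi.single_eq_smul_single_one]
  exact smul_mem _ a (subset_span ⟨i, hi, rfl⟩)

theorem finrank_coordSubspace [Fintype ι] (s : Finset ι) :
    finrank F (coordSubspace F (s : Set ι)) = s.card := by
  have hli : LinearIndependent F fun i : (s : Set ι) => (Pi.single (i : ι) (1 : F) : ι → F) :=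
    (Pi.linearIndependent_single_one ι F).comp _ Subtype.val_injective
  rw [coordSubspace, Set.image_eq_range, finrank_span_eq_card hli]
  simp

theorem mul_mem_coordSubspace {s : Set ι} (d : ι → F) {v : ι → F}
    (hv : v ∈ coordSubspace F s) : d * v ∈ coordSubspace F s := by
  induction hv using span_induction with
  | mem _ h =>
    obtain ⟨i, hi, rfl⟩ := h
    rw [← Pi.single_mul_right, mul_one]
    exact single_mem_coordSubspace hi _
  | zero => simp
  | add _ _ _ _ hx hy => rw [mul_add]; exact add_mem hx hy
  | smul a _ _ hx => rw [mul_smul_comm]; exact smul_mem _ a hx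

theorem Submodule.single_mem_of_mul_mem {V : Submodule F (ι → F)}
    (hV : ∀ d : ι → F, ∀ v ∈ V, d * v ∈ V) (i : ι) {v : ι → F} (hv : v ∈ V) :
    Pi.single i (v i) ∈ V := by
  simpa [← Pi.single_mul_left] using hV (Pi.single i 1) v hv

theorem Submodule.eq_coordSubspace_of_mul_mem [Fintype ι] {V : Submodule F (ι → F)}
    (hV : ∀ d : ι → F, ∀ v ∈ V, d * v ∈ V) :
    V = coordSubspace F {i | Pi.single i 1 ∈ V} := by
  refine le_antisymm (fun v hv => ?_) (span_le.mpr ?_)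
  · rw [← Finset.univ_sum_single v]
    refine sum_mem fun i _ => ?_
    by_cases hvi : v i = 0
    · simp [hvi]
    · have hsingle : Pi.single i (1 : F) ∈ V := by
        have := V.smul_mem (v i)⁻¹ (V.single_mem_of_mul_mem hV i hv)
        rwa [← Pi.single_smul', smul_eq_mul, inv_mul_cancel₀ hvi] at this
      apply single_mem_coordSubspace
      exact hsingle
  · rintro _ ⟨i, hi, rfl⟩
    exact hi

theorem diagonal_invariant_iff_tabloid_general
    (F : Type) [Field F] [Infinite F] (N r : ℕ)
    (C : Fin r → Finset ℕ)
    (V : Fin r → Submodule F (Fin N → F))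
    (hdim : ∀ j, Module.finrank F (V j) = (C j).card)
    (hmono : ∀ j k, C j ⊆ C k → V j ≤ V k) :
    (∀ x : Fin N → F, (∀ i, x i ≠ 0) →
        ∀ j, ∀ v ∈ V j, (Matrix.diagonal x).mulVec v ∈ V j) ↔
      ∃ t : Fin r → Finset (Fin N),
        (∀ j, (t j).card = (C j).card) ∧
        (∀ j k, C j ⊆ C k → t j ⊆ t k) ∧
        (∀ j, V j = Submodule.span F
          ((fun i : Fin N => (Pi.single i (1 : F) : Fin N → F)) '' (t j : Set (Fin N)))) := by
  classical
  have hdiag (x v : Fin N → F) : (Matrix.diagonal x).mulVec v = x * v :=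
    funext fun k => Matrix.mulVec_diagonal x v k
  simp only [hdiag]
  constructor
  · intro hinv
    have hcoord (j : Fin r) : V j = coordSubspace F {i | Pi.single i (1 : F) ∈ V j} :=
      (V j).eq_coordSubspace_of_mul_mem fun d _ hv =>
        (V j).mul_mem_of_forall_ne_zero (fun x hx => hinv x hx j) d hv
    refine ⟨fun j => {i | Pi.single i (1 : F) ∈ V j}.toFinset, fun j => ?_,
      fun j k hjk => ?_, fun j => ?_⟩
    · rw [← hdim j, hcoord j, ← finrank_coordSubspace (F := F), Set.coe_toFinset]
    · intro i hi
      simp only [Set.mem_toFinset] at hi ⊢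
      exact hmono j k hjk hi
    · rw [Set.coe_toFinset]; exact hcoord j
  · rintro ⟨t, -, -, hspan⟩ x - j v hv
    rw [hspan j] at hv ⊢
    exact mul_mem_coordSubspace x hv

/-- **Torus-fixed configurations** (classification of the fixed points of the diagonal
torus on a smooth configuration variety): given a diagram with pairwise distinct columns
in `{1,…,N}` (rows encoded on `Fin N`, `k : Fin N` standing for row `k+1`), closed under
intersections, and subspaces `V_j ⊆ F^N` with `dim V_j = |C_j|` respecting inclusions of
columns, the family is invariant under every invertible diagonal matrix iff it comes
from a standard column tabloid `t`, with `V_j` spanned by the standard basis vectors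
`e_i` for `i ∈ t(C_j)`. -/
theorem diagonal_invariant_iff_tabloid
    (F : Type) [Field F] [Infinite F] (N r : ℕ) (hN : 1 ≤ N)
    (C : Fin r → Finset ℕ) (hinj : Function.Injective C)
    (hsub : ∀ j, C j ⊆ Finset.Icc 1 N)
    (hclosed : ∀ (S : Finset (Fin r)) (hS : S.Nonempty), ∃ j, S.inf' hS C = C j)
    (V : Fin r → Submodule F (Fin N → F))
    (hdim : ∀ j, Module.finrank F (V j) = (C j).card)
    (hmono : ∀ j k, C j ⊆ C k → V j ≤ V k) :
    (∀ x : Fin N → F, (∀ i, x i ≠ 0) →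
        ∀ j, ∀ v ∈ V j, (Matrix.diagonal x).mulVec v ∈ V j) ↔
      ∃ t : Fin r → Finset (Fin N),
        (∀ j, (t j).card = (C j).card) ∧
        (∀ j k, C j ⊆ C k → t j ⊆ t k) ∧
        (∀ j, V j = Submodule.span F
          ((fun i : Fin N => (Pi.single i (1 : F) : Fin N → F)) '' (t j : Set (Fin N)))) :=
  diagonal_invariant_iff_tabloid_general F N r C V hdim hmono
end
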